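/- arXiv:1512.05565 — 14 statements merged into one kernel-verified Lean document; each statement's English description precedes it below -/
import Mathlib

section
/- For every integer n ≥ 1, every red/blue coloring of the Boolean lattice Q_{n²+2n} contains a monochromatic copy of Q_n. Consequently R(Q_n, Q_n) ≤ n² + 2n. -/
/-- `f` is an embedding of the Boolean lattice `Q_n` into `Q_N`:
`A ⊆ B` iff `f A ⊆ f B` (this forces injectivity). -/
def IsCubeEmb {n N : ℕ} (f : Finset (Fin n) → Finset (Fin N)) : Prop :=
  ∀ A B : Finset (Fin n), A ⊆ B ↔ f A ⊆ f B

/-- Every red/blue coloring of `Q_N` (red = `true`, blue = `false`) contains a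
red copy of `Q_n` or a blue copy of `Q_m`. -/
def CubeRamseyProp (n m N : ℕ) : Prop :=
  ∀ c : Finset (Fin N) → Bool,
    (∃ f : Finset (Fin n) → Finset (Fin N), IsCubeEmb f ∧ ∀ A, c (f A) = true) ∨
    (∃ g : Finset (Fin m) → Finset (Fin N), IsCubeEmb g ∧ ∀ A, c (g A) = false)

/-- The poset Ramsey number `R(Q_n, Q_m)`. -/
noncomputable def posetRamsey (n m : ℕ) : ℕ := sInf {N | CubeRamseyProp n m N}

/-!
Greedy argument of Axenovich and Walzer. Split the ground set into `X` with `|X| = n` and layers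
`Y_0, …, Y_n` of size `m`. Going through the subsets `A ⊆ X` by increasing size, let `V(A)` be the
union of the sets chosen for the proper subsets of `A`, and choose, if possible, `T_A ⊆ Y_{|A|}`
with `A ∪ V(A) ∪ T_A` red. If this succeeds for every `A`, then `A ↦ A ∪ V(A) ∪ T_A` is a red copy
of `Q_n`. If it fails for some `A`, then `T ↦ A ∪ V(A) ∪ T` on the subsets of `Y_{|A|}` is a blue
copy of `Q_m`, because `V(A)` lies in the lower layers. Hence `R(Q_n, Q_m) ≤ n + (n + 1) m`.
-/

theorem Finset.disjSum_subset_disjSum_iff {α β : Type*} {s₁ s₂ : Finset α} {t₁ t₂ : Finset β} :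
    s₁.disjSum t₁ ⊆ s₂.disjSum t₂ ↔ s₁ ⊆ s₂ ∧ t₁ ⊆ t₂ := by
  rw [disjSum_subset, toLeft_disjSum, toRight_disjSum]

theorem isCubeEmb_coe {n N : ℕ} (f : Finset (Fin n) ↪o Finset (Fin N)) : IsCubeEmb f :=
  fun _ _ => f.le_iff_le.symm

theorem cubeRamseyProp_of_equiv {n m N : ℕ} {α : Type*} (e : α ≃ Fin N)
    (h : ∀ c : Finset α → Bool,
      (∃ f : Finset (Fin n) ↪o Finset α, ∀ A, c (f A) = true) ∨
      (∃ g : Finset (Fin m) ↪o Finset α, ∀ T, c (g T) = false)) :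
    CubeRamseyProp n m N := by
  intro c
  let E := Finset.mapEmbedding e.toEmbedding
  rcases h (fun S => c (E S)) with ⟨f, hf⟩ | ⟨g, hg⟩
  · exact Or.inl ⟨f.trans E, isCubeEmb_coe _, hf⟩
  · exact Or.inr ⟨g.trans E, isCubeEmb_coe _, hg⟩

namespace CubeRamsey

open Finset

variable {ι κ : Type*} [Fintype ι]

def level (A : Finset ι) : Fin (Fintype.card ι + 1) :=
  ⟨#A, Nat.lt_succ_of_le A.card_le_univ⟩

theorem level_lt_level {A B : Finset ι} (h : B ⊂ A) : level B < level A :=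
  Fin.mk_lt_mk.2 (card_lt_card h)

variable [DecidableEq ι] [DecidableEq κ]

-- The ground set `ι ⊕ Fin (|ι| + 1) × κ` is `X = ι` together with the layers `Y_k = {k} × κ`;
-- the layer `Y_k` is reserved for the sets `A ⊆ X` with `|A| = k`.
variable (c : Finset (ι ⊕ Fin (Fintype.card ι + 1) × κ) → Bool)

open Classical in
noncomputable def pick (A : Finset ι) : Finset κ :=
  if h : ∃ T : Finset κ, c (A.disjSum
      (A.ssubsets.attach.sup (fun B => {level B.1} ×ˢ pick B.1) ∪ {level A} ×ˢ T)) = true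
  then h.choose else ∅
termination_by #A
decreasing_by all_goals exact card_lt_card (mem_ssubsets.1 B.2)

noncomputable def below (A : Finset ι) : Finset (Fin (Fintype.card ι + 1) × κ) :=
  A.ssubsets.sup fun B => {level B} ×ˢ pick c B

noncomputable def tail (A : Finset ι) : Finset (Fin (Fintype.card ι + 1) × κ) :=
  A.powerset.sup fun B => {level B} ×ˢ pick c B

theorem pick_spec {A : Finset ι} (h : ∃ T : Finset κ,
      c (A.disjSum (below c A ∪ {level A} ×ˢ T)) = true) :
    c (A.disjSum (below c A ∪ {level A} ×ˢ pick c A)) = true := by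
  rw [pick, below, sup_attach (f := fun B => {level B} ×ˢ pick c B)] at *
  rw [dif_pos h]
  exact h.choose_spec

theorem tail_eq_below_union (A : Finset ι) : tail c A = below c A ∪ {level A} ×ˢ pick c A := by
  rw [tail, below, ← insert_erase (mem_powerset_self A), sup_insert, union_comm]
  rfl

theorem tail_mono {A B : Finset ι} (h : A ⊆ B) : tail c A ⊆ tail c B :=
  sup_mono (powerset_mono.2 h)

theorem lt_level_of_mem_below {A : Finset ι} {p : Fin (Fintype.card ι + 1) × κ}
    (hp : p ∈ below c A) : p.1 < level A := by
  obtain ⟨B, hB, hpB⟩ := mem_sup.1 hp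
  rw [mem_product, mem_singleton] at hpB
  exact hpB.1 ▸ level_lt_level (mem_ssubsets.1 hB)

theorem exists_red_copy (h : ∀ A : Finset ι, ∃ T : Finset κ,
      c (A.disjSum (below c A ∪ {level A} ×ˢ T)) = true) :
    ∃ f : Finset ι ↪o Finset (ι ⊕ Fin (Fintype.card ι + 1) × κ), ∀ A, c (f A) = true := by
  refine ⟨OrderEmbedding.ofMapLEIff (fun A => A.disjSum (tail c A)) fun A B => ?_, fun A => ?_⟩
  · exact disjSum_subset_disjSum_iff.trans ⟨And.left, fun h => ⟨h, tail_mono c h⟩⟩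
  · simpa [tail_eq_below_union] using pick_spec c (h A)

theorem exists_blue_copy {A : Finset ι} (h : ∀ T : Finset κ,
      c (A.disjSum (below c A ∪ {level A} ×ˢ T)) = false) :
    ∃ g : Finset κ ↪o Finset (ι ⊕ Fin (Fintype.card ι + 1) × κ), ∀ T, c (g T) = false := by
  refine ⟨OrderEmbedding.ofMapLEIff (fun T => A.disjSum (below c A ∪ {level A} ×ˢ T))
    fun T T' => ?_, h⟩
  refine disjSum_subset_disjSum_iff.trans ⟨fun hT y hy => ?_, fun hT => ⟨subset_rfl, ?_⟩⟩
  · have hmem := hT.2 (mem_union_right _ (mk_mem_product (mem_singleton_self (level A)) hy))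
    rcases mem_union.1 hmem with hbelow | hlayer
    · exact (lt_irrefl _ (lt_level_of_mem_below c hbelow)).elim
    · exact (mem_product.1 hlayer).2
  · exact union_subset_union_right (product_subset_product_right hT)

theorem exists_monochromatic_copy :
    (∃ f : Finset ι ↪o Finset (ι ⊕ Fin (Fintype.card ι + 1) × κ), ∀ A, c (f A) = true) ∨
    (∃ g : Finset κ ↪o Finset (ι ⊕ Fin (Fintype.card ι + 1) × κ), ∀ T, c (g T) = false) := by
  by_cases h : ∀ A : Finset ι, ∃ T : Finset κ,
      c (A.disjSum (below c A ∪ {level A} ×ˢ T)) = true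
  · exact Or.inl (exists_red_copy c h)
  · push Not at h
    obtain ⟨A, hA⟩ := h
    exact Or.inr (exists_blue_copy c fun T => by simpa using hA T)

end CubeRamsey

theorem cubeRamseyProp_add_succ_mul (n m : ℕ) : CubeRamseyProp n m (n + (n + 1) * m) :=
  cubeRamseyProp_of_equiv (Fintype.equivFinOfCardEq (by simp))
    CubeRamsey.exists_monochromatic_copy

theorem upper_bound_RQnQn_general (n : ℕ) :
    (∀ c : Finset (Fin (n ^ 2 + 2 * n)) → Bool,
      ∃ (col : Bool) (f : Finset (Fin n) → Finset (Fin (n ^ 2 + 2 * n))),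
        IsCubeEmb f ∧ ∀ A, c (f A) = col) ∧
    posetRamsey n n ≤ n ^ 2 + 2 * n := by
  have hN : n ^ 2 + 2 * n = n + (n + 1) * n := by ring
  have hR : CubeRamseyProp n n (n ^ 2 + 2 * n) := hN ▸ cubeRamseyProp_add_succ_mul n n
  refine ⟨fun c => ?_, Nat.sInf_le hR⟩
  rcases hR c with ⟨f, hf, hc⟩ | ⟨f, hf, hc⟩
  exacts [⟨true, f, hf, hc⟩, ⟨false, f, hf, hc⟩]

/-- For every `n ≥ 1`, every red/blue coloring of `Q_{n²+2n}` has a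
monochromatic copy of `Q_n`; consequently `R(Q_n, Q_n) ≤ n² + 2n`. -/
theorem upper_bound_RQnQn (n : ℕ) (hn : 1 ≤ n) :
    (∀ c : Finset (Fin (n ^ 2 + 2 * n)) → Bool,
      ∃ (col : Bool) (f : Finset (Fin n) → Finset (Fin (n ^ 2 + 2 * n))),
        IsCubeEmb f ∧ ∀ A, c (f A) = col) ∧
    posetRamsey n n ≤ n ^ 2 + 2 * n :=
  upper_bound_RQnQn_general n
end

section
/- For every integer n ≥ 1: (a) every red/blue coloring of the Boolean lattice Q_{n+1} contains either a red copy of Q_1 (that is, two distinct red sets one contained in the other) or a blue copy of Q_n; (b) there exists a red/blue coloring of Q_n containing neither a red copy of Q_1 nor a blue copy of Q_n. Hence R(Q_1, Q_n) = n + 1. -/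
namespace IsCubeEmb

variable {n N M : ℕ} {f : Finset (Fin n) → Finset (Fin N)}

theorem injective (hf : IsCubeEmb f) : Function.Injective f := fun A B hAB =>
  subset_antisymm ((hf A B).mpr hAB.le) ((hf B A).mpr hAB.ge)

theorem surjective {g : Finset (Fin n) → Finset (Fin n)} (hg : IsCubeEmb g) :
    Function.Surjective g :=
  Finite.surjective_of_injective hg.injective

theorem comp {g : Finset (Fin N) → Finset (Fin M)} (hf : IsCubeEmb f) (hg : IsCubeEmb g) :
    IsCubeEmb (g ∘ f) :=
  fun A B => (hf A B).trans (hg _ _)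

end IsCubeEmb

theorem isCubeEmb_map {N M : ℕ} (e : Fin N ↪ Fin M) : IsCubeEmb (Finset.map e) :=
  fun _ _ => Finset.map_subset_map.symm

theorem isCubeEmb_insert_of_monotone {n N : ℕ} (e : Fin n ↪ Fin N) {p : Fin N}
    (hp : ∀ i, e i ≠ p) {P : Finset (Fin n) → Prop} [DecidablePred P] (hP : Monotone P) :
    IsCubeEmb fun A => if P A then insert p (A.map e) else A.map e := by
  intro A B
  have map_subset_ite (A : Finset (Fin n)) :
      A.map e ⊆ if P A then insert p (A.map e) else A.map e := by
    split_ifs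
    exacts [Finset.subset_insert _ _, subset_rfl]
  have ite_subset_insert (A : Finset (Fin n)) :
      (if P A then insert p (A.map e) else A.map e) ⊆ insert p (A.map e) := by
    split_ifs
    exacts [subset_rfl, Finset.subset_insert _ _]
  constructor
  · intro hAB
    have hmap : A.map e ⊆ B.map e := Finset.map_subset_map.mpr hAB
    by_cases hPA : P A
    · simpa only [if_pos hPA, if_pos (hP hAB hPA)] using Finset.insert_subset_insert p hmap
    · simpa only [if_neg hPA] using hmap.trans (map_subset_ite B)
  · intro hsub a ha
    have hea : e a ∈ insert p (B.map e) :=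
      ((map_subset_ite A).trans hsub |>.trans (ite_subset_insert B)) (Finset.mem_map_of_mem e ha)
    rcases Finset.mem_insert.mp hea with h | h
    exacts [absurd h (hp a), (Finset.mem_map' e).mp h]

theorem exists_isCubeEmb_fin_one_iff {N : ℕ} (c : Finset (Fin N) → Bool) (b : Bool) :
    (∃ f : Finset (Fin 1) → Finset (Fin N), IsCubeEmb f ∧ ∀ A, c (f A) = b) ↔
      ∃ X Y, X ⊂ Y ∧ c X = b ∧ c Y = b := by
  constructor
  · rintro ⟨f, hf, hc⟩
    refine ⟨f ∅, f Finset.univ, ?_, hc _, hc _⟩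
    refine ((hf _ _).mp (Finset.empty_subset _)).ssubset_of_not_subset fun h => ?_
    simpa using (hf _ _).mpr h
  · rintro ⟨X, Y, hXY, hX, hY⟩
    have subset_iff (A B : Finset (Fin 1)) : A ⊆ B ↔ (0 ∈ A → 0 ∈ B) := by
      simp only [Finset.subset_iff, Fin.forall_fin_one]
    refine ⟨fun A => if 0 ∈ A then Y else X, fun A B => ?_, fun A => ?_⟩
    · dsimp only
      rw [subset_iff]
      split_ifs <;> simp_all [hXY.subset, hXY.not_subset]
    · dsimp only
      split_ifs <;> assumption

theorem CubeRamseyProp.mono {n m N N' : ℕ} (h : N ≤ N') (hN : CubeRamseyProp n m N) :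
    CubeRamseyProp n m N' := by
  intro c
  have hι := isCubeEmb_map (Fin.castLEEmb h)
  rcases hN (c ∘ Finset.map (Fin.castLEEmb h)) with ⟨f, hf, hc⟩ | ⟨g, hg, hc⟩
  exacts [Or.inl ⟨_, hf.comp hι, hc⟩, Or.inr ⟨_, hg.comp hι, hc⟩]

theorem exists_blue_copy_of_forall_red_not_ssubset {n : ℕ} (c : Finset (Fin (n + 1)) → Bool)
    (hc : ∀ X Y, X ⊂ Y → c X = true → c Y ≠ true) :
    ∃ g : Finset (Fin n) → Finset (Fin (n + 1)), IsCubeEmb g ∧ ∀ A, c (g A) = false := by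
  classical
  let ι := Fin.castSuccEmb (n := n)
  let P : Finset (Fin n) → Prop := fun A => ∃ X ⊆ A.map ι, c X = true
  have hP : Monotone P := fun A B hAB ⟨X, hX, hcX⟩ =>
    ⟨X, hX.trans (Finset.map_subset_map.mpr hAB), hcX⟩
  refine ⟨_, isCubeEmb_insert_of_monotone ι Fin.castSucc_ne_last hP, fun A => ?_⟩
  split_ifs with hPA
  · obtain ⟨X, hX, hcX⟩ := hPA
    have hlast : Fin.last n ∉ A.map ι := fun h => by
      obtain ⟨a, -, ha⟩ := Finset.mem_map.mp h
      exact Fin.castSucc_ne_last a ha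
    exact Bool.eq_false_iff.mpr <|
      hc X _ (hX.trans_ssubset (Finset.ssubset_insert hlast)) hcX
  · exact Bool.eq_false_iff.mpr fun hcA => hPA ⟨_, subset_rfl, hcA⟩

theorem cubeRamseyProp_one_succ (n : ℕ) : CubeRamseyProp 1 n (n + 1) := by
  intro c
  by_cases hred : ∃ X Y, X ⊂ Y ∧ c X = true ∧ c Y = true
  · exact Or.inl ((exists_isCubeEmb_fin_one_iff c true).mpr hred)
  · push Not at hred
    exact Or.inr (exists_blue_copy_of_forall_red_not_ssubset c hred)

theorem exists_coloring_not_red_one_not_blue_self (n : ℕ) :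
    ∃ c : Finset (Fin n) → Bool,
      (¬ ∃ f : Finset (Fin 1) → Finset (Fin n), IsCubeEmb f ∧ ∀ A, c (f A) = true) ∧
      (¬ ∃ g : Finset (Fin n) → Finset (Fin n), IsCubeEmb g ∧ ∀ A, c (g A) = false) := by
  refine ⟨fun X => decide (X = ∅), ?_, ?_⟩
  · intro hred
    obtain ⟨X, Y, hXY, hX, hY⟩ := (exists_isCubeEmb_fin_one_iff (fun X => decide (X = ∅)) true).mp hred
    simp only [decide_eq_true_eq] at hX hY
    exact hXY.ne (hX.trans hY.symm)
  · rintro ⟨g, hg, hc⟩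
    obtain ⟨A, hA⟩ := hg.surjective ∅
    simpa [hA] using hc A

theorem posetRamsey_eq_succ {n m N : ℕ} (h : CubeRamseyProp n m (N + 1))
    (h' : ¬ CubeRamseyProp n m N) : posetRamsey n m = N + 1 :=
  (Nat.sInf_upward_closed_eq_succ_iff (fun _ _ hle hk => CubeRamseyProp.mono hle hk) N).mpr
    ⟨h, h'⟩

theorem RQ1Qn_general (n : ℕ) :
    (∀ c : Finset (Fin (n + 1)) → Bool,
      (∃ f : Finset (Fin 1) → Finset (Fin (n + 1)), IsCubeEmb f ∧ ∀ A, c (f A) = true) ∨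
      (∃ g : Finset (Fin n) → Finset (Fin (n + 1)), IsCubeEmb g ∧ ∀ A, c (g A) = false)) ∧
    (∃ c : Finset (Fin n) → Bool,
      (¬ ∃ f : Finset (Fin 1) → Finset (Fin n), IsCubeEmb f ∧ ∀ A, c (f A) = true) ∧
      (¬ ∃ g : Finset (Fin n) → Finset (Fin n), IsCubeEmb g ∧ ∀ A, c (g A) = false)) ∧
    posetRamsey 1 n = n + 1 := by
  obtain ⟨c, hred, hblue⟩ := exists_coloring_not_red_one_not_blue_self n
  have not_ramsey : ¬ CubeRamseyProp 1 n n := fun h => (h c).elim hred hblue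
  exact ⟨cubeRamseyProp_one_succ n, ⟨c, hred, hblue⟩,
    posetRamsey_eq_succ (cubeRamseyProp_one_succ n) not_ramsey⟩

/-- (a) Every red/blue coloring of `Q_{n+1}` contains a red copy of `Q_1` or a
blue copy of `Q_n`; (b) some red/blue coloring of `Q_n` contains neither.
Hence `R(Q_1, Q_n) = n + 1`. -/
theorem RQ1Qn (n : ℕ) (hn : 1 ≤ n) :
    (∀ c : Finset (Fin (n + 1)) → Bool,
      (∃ f : Finset (Fin 1) → Finset (Fin (n + 1)), IsCubeEmb f ∧ ∀ A, c (f A) = true) ∨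
      (∃ g : Finset (Fin n) → Finset (Fin (n + 1)), IsCubeEmb g ∧ ∀ A, c (g A) = false)) ∧
    (∃ c : Finset (Fin n) → Bool,
      (¬ ∃ f : Finset (Fin 1) → Finset (Fin n), IsCubeEmb f ∧ ∀ A, c (f A) = true) ∧
      (¬ ∃ g : Finset (Fin n) → Finset (Fin n), IsCubeEmb g ∧ ∀ A, c (g A) = false)) ∧
    posetRamsey 1 n = n + 1 :=
  RQ1Qn_general n
end

section
/- For every integer n ≥ 1, every red/blue coloring of the Boolean lattice Q_{2n+2} contains a red copy of Q_2 or a blue copy of Q_n. Consequently R(Q_2, Q_n) ≤ 2n + 2. -/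
open Finset

section

variable {α : Type*}

def HasRedPairOfWidth (c : Finset α → Bool) (X : Finset α) (k : ℕ) : Prop :=
  ∃ s r, s ⊆ r ∧ r ⊆ X ∧ c s = true ∧ c r = true ∧ #s + k ≤ #r

variable {c : Finset α → Bool} {X Y : Finset α} {k : ℕ}

theorem HasRedPairOfWidth.mono (h : HasRedPairOfWidth c X k) (hXY : X ⊆ Y) :
    HasRedPairOfWidth c Y k := by
  obtain ⟨s, r, hsr, hrX, hs, hr, hk⟩ := h
  exact ⟨s, r, hsr, hrX.trans hXY, hs, hr, hk⟩

theorem HasRedPairOfWidth.succ (h : HasRedPairOfWidth c X k) (hXY : X ⊂ Y) (hY : c Y = true) :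
    HasRedPairOfWidth c Y (k + 1) := by
  obtain ⟨s, r, hsr, hrX, hs, -, hk⟩ := h
  have := card_le_card hrX
  have := card_lt_card hXY
  exact ⟨s, Y, hsr.trans (hrX.trans hXY.subset), subset_rfl, hs, hY, by omega⟩

theorem hasRedPairOfWidth_of_red {X : ℕ → Finset α} (hX : ∀ i < k, X i ⊂ X (i + 1))
    (hlt : ∀ i < k, HasRedPairOfWidth c (X i) i) (hred : c (X k) = true) :
    HasRedPairOfWidth c (X k) k := by
  cases k with
  | zero => exact ⟨X 0, X 0, subset_rfl, subset_rfl, hred, hred, le_rfl⟩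
  | succ i => exact (hlt i i.lt_succ_self).succ (hX i i.lt_succ_self) hred

end

theorem isCubeEmb_image_union {n N : ℕ} {e : Fin n → Fin N} (he : Function.Injective e)
    {φ : Finset (Fin n) → Finset (Fin N)} (hφ : Monotone φ) (hdisj : ∀ A x, e x ∉ φ A) :
    IsCubeEmb fun A => A.image e ∪ φ A := by
  refine fun A B =>
    ⟨fun h => union_subset_union (image_subset_image h) (hφ h), fun h x hx => ?_⟩
  have hex := h (mem_union_left _ (mem_image_of_mem e hx))
  rw [mem_union, he.mem_finset_image] at hex
  exact hex.resolve_right (hdisj B x)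

theorem isCubeEmb_square {N : ℕ} {p u v t : Finset (Fin N)} (hpu : p ⊆ u) (hpv : p ⊆ v)
    (hut : u ⊆ t) (hvt : v ⊆ t) (huv : ¬u ⊆ v) (hvu : ¬v ⊆ u) :
    IsCubeEmb fun A : Finset (Fin 2) =>
      if 0 ∈ A then (if 1 ∈ A then t else u) else (if 1 ∈ A then v else p) := by
  have hup : ¬u ⊆ p := fun h => huv (h.trans hpv)
  have hvp : ¬v ⊆ p := fun h => hvu (h.trans hpu)
  have htu : ¬t ⊆ u := fun h => hvu (hvt.trans h)
  have htv : ¬t ⊆ v := fun h => huv (hut.trans h)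
  have htp : ¬t ⊆ p := fun h => htu (h.trans hpu)
  intro A B
  simp only [subset_iff (s₁ := A), Fin.forall_fin_two]
  by_cases h0A : (0 : Fin 2) ∈ A <;> by_cases h1A : (1 : Fin 2) ∈ A <;>
    by_cases h0B : (0 : Fin 2) ∈ B <;> by_cases h1B : (1 : Fin 2) ∈ B <;>
    simp [*, hpu.trans hut]

def block (N n i : ℕ) : Finset (Fin N) := {x | n ≤ (x : ℕ) ∧ (x : ℕ) < n + i}

theorem mem_block {N n i : ℕ} {x : Fin N} :
    x ∈ block N n i ↔ n ≤ (x : ℕ) ∧ (x : ℕ) < n + i := by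
  simp [block]

theorem block_mono (N n : ℕ) : Monotone (block N n) :=
  fun _ _ hij _ hx => by rw [mem_block] at hx ⊢; omega

theorem exists_blue_cube_of_not_hasRedPairOfWidth {n m N : ℕ} (hN : n + m ≤ N)
    (c : Finset (Fin N) → Bool) (hc : ¬HasRedPairOfWidth c univ m) :
    ∃ g : Finset (Fin n) → Finset (Fin N), IsCubeEmb g ∧ ∀ A, c (g A) = false := by
  classical
  set e : Fin n → Fin N := Fin.castLE (by omega)
  set X : Finset (Fin n) → ℕ → Finset (Fin N) := fun A i => A.image e ∪ block N n i
  have he_notMem : ∀ i x, e x ∉ block N n i := fun i x hx => by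
    rw [mem_block] at hx; simp [e] at hx; omega
  have hX_ssubset : ∀ A i, i < m → X A i ⊂ X A (i + 1) := by
    intro A i hi
    refine ssubset_iff_of_subset (union_subset_union_right (block_mono N n i.le_succ)) |>.mpr
      ⟨⟨n + i, by omega⟩, mem_union_right _ (mem_block.mpr (by simp)), ?_⟩
    simp only [mem_union, mem_image, mem_block, not_or, not_exists, not_and]
    exact ⟨fun x _ h => by simp [e, Fin.ext_iff] at h; omega, by simp⟩
  have hfind : ∀ A, ∃ i, ¬HasRedPairOfWidth c (X A i) i := fun A =>
    ⟨m, fun h => hc (h.mono (subset_univ _))⟩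
  set j : Finset (Fin n) → ℕ := fun A => Nat.find (hfind A)
  have hj_le : ∀ A, j A ≤ m := fun A => Nat.find_min' _ fun h => hc (h.mono (subset_univ _))
  have hj_mono : Monotone j := fun A B hAB =>
    Nat.find_mono fun i hB hA => hB (hA.mono (union_subset_union_left (image_subset_image hAB)))
  refine ⟨fun A => X A (j A), isCubeEmb_image_union (Fin.castLE_injective _)
    ((block_mono N n).comp hj_mono) fun A x => he_notMem (j A) x, fun A => ?_⟩
  refine Bool.eq_false_iff.mpr fun hred => Nat.find_spec (hfind A) ?_
  exact hasRedPairOfWidth_of_red (fun i hi => hX_ssubset A i (hi.trans_le (hj_le A)))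
    (fun i hi => not_not.mp (Nat.find_min _ hi)) hred

theorem red_square_or_blue_cube_of_hasRedPairOfWidth {n N : ℕ} (c : Finset (Fin N) → Bool)
    (hc : HasRedPairOfWidth c univ (n + 2)) :
    (∃ f : Finset (Fin 2) → Finset (Fin N), IsCubeEmb f ∧ ∀ A, c (f A) = true) ∨
    (∃ g : Finset (Fin n) → Finset (Fin N), IsCubeEmb g ∧ ∀ A, c (g A) = false) := by
  obtain ⟨P, T, hPT, -, hP, hT, hcard⟩ := hc
  have hW : n ≤ #(T \ P) := by rw [card_sdiff_of_subset hPT]; omega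
  obtain ⟨W, hWTP, hWcard⟩ := exists_subset_card_eq hW
  have hrest : 1 < #((T \ P) \ W) := by
    rw [card_sdiff_of_subset hWTP, card_sdiff_of_subset hPT]; omega
  obtain ⟨y, hy, z, hz, hyz⟩ := one_lt_card.mp hrest
  set e := W.orderEmbOfFin hWcard
  have he_mem : ∀ i, e i ∈ W := W.orderEmbOfFin_mem hWcard
  have himage : ∀ A : Finset (Fin n), A.image e ⊆ W := fun A =>
    image_subset_iff.mpr fun i _ => he_mem i
  set g : Fin N → Finset (Fin n) → Finset (Fin N) := fun w A => A.image e ∪ (P ∪ {w})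
  have hg_emb : ∀ w ∈ (T \ P) \ W, IsCubeEmb (g w) := fun w hw =>
    isCubeEmb_image_union e.injective monotone_const fun _ x hx => by
      simp only [mem_sdiff] at hw
      rcases mem_union.mp hx with hx | hx
      · exact (mem_sdiff.mp (hWTP (he_mem x))).2 hx
      · exact hw.2 (mem_singleton.mp hx ▸ he_mem x)
  have hP_sub : ∀ w A, P ⊆ g w A := fun w A => subset_union_right.trans' subset_union_left
  have hsub_T : ∀ w ∈ (T \ P) \ W, ∀ A, g w A ⊆ T := fun w hw A =>
    union_subset (fun x hx => (mem_sdiff.mp (hWTP (himage A hx))).1)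
      (union_subset hPT (singleton_subset_iff.mpr (mem_sdiff.mp (mem_sdiff.mp hw).1).1))
  have hmem : ∀ w A, w ∈ g w A := by simp [g]
  have hnotMem : ∀ w v, v ∈ (T \ P) \ W → v ≠ w → ∀ A, v ∉ g w A := by
    intro w v hv hvw A hvg
    simp only [mem_sdiff] at hv
    rcases mem_union.mp hvg with h | h
    · exact hv.2 (himage A h)
    · exact (mem_union.mp h).elim hv.1.2 fun h => hvw (mem_singleton.mp h)
  by_cases hy_blue : ∀ A, c (g y A) = false
  · exact .inr ⟨g y, hg_emb y hy, hy_blue⟩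
  by_cases hz_blue : ∀ A, c (g z A) = false
  · exact .inr ⟨g z, hg_emb z hz, hz_blue⟩
  simp only [not_forall, Bool.not_eq_false] at hy_blue hz_blue
  obtain ⟨A, hA⟩ := hy_blue
  obtain ⟨B, hB⟩ := hz_blue
  refine .inl ⟨_, isCubeEmb_square (hP_sub y A) (hP_sub z B) (hsub_T y hy A) (hsub_T z hz B)
    (fun h => hnotMem z y hy hyz B (h (hmem y A)))
    (fun h => hnotMem y z hz hyz.symm A (h (hmem z B))), fun A => ?_⟩
  split_ifs <;> assumption

theorem cubeRamseyProp_two_of_le {n N : ℕ} (hN : 2 * n + 2 ≤ N) : CubeRamseyProp 2 n N := by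
  intro c
  by_cases hc : HasRedPairOfWidth c univ (n + 2)
  · exact red_square_or_blue_cube_of_hasRedPairOfWidth c hc
  · exact .inr (exists_blue_cube_of_not_hasRedPairOfWidth (by omega) c hc)

theorem RQ2Qn_upper_general (n : ℕ) :
    (∀ c : Finset (Fin (2 * n + 2)) → Bool,
      (∃ f : Finset (Fin 2) → Finset (Fin (2 * n + 2)), IsCubeEmb f ∧ ∀ A, c (f A) = true) ∨
      (∃ g : Finset (Fin n) → Finset (Fin (2 * n + 2)), IsCubeEmb g ∧ ∀ A, c (g A) = false)) ∧
    posetRamsey 2 n ≤ 2 * n + 2 :=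
  ⟨cubeRamseyProp_two_of_le le_rfl, Nat.sInf_le (cubeRamseyProp_two_of_le le_rfl)⟩

/-- Every red/blue coloring of `Q_{2n+2}` contains a red copy of `Q_2` or a
blue copy of `Q_n`; consequently `R(Q_2, Q_n) ≤ 2n + 2`. -/
theorem RQ2Qn_upper (n : ℕ) (hn : 1 ≤ n) :
    (∀ c : Finset (Fin (2 * n + 2)) → Bool,
      (∃ f : Finset (Fin 2) → Finset (Fin (2 * n + 2)), IsCubeEmb f ∧ ∀ A, c (f A) = true) ∨
      (∃ g : Finset (Fin n) → Finset (Fin (2 * n + 2)), IsCubeEmb g ∧ ∀ A, c (g A) = false)) ∧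
    posetRamsey 2 n ≤ 2 * n + 2 :=
  RQ2Qn_upper_general n
end

section
/- Every red/blue coloring of the Boolean lattice Q_4 contains a monochromatic copy of Q_2, and there exists a red/blue coloring of Q_3 with no monochromatic copy of Q_2. Hence R(Q_2, Q_2) = 4. -/
/-!
A copy of `Q_2` is the same as a diamond `W ⊂ X, Y ⊂ Z` with `X`, `Y` incomparable, so the upper
bound asks for a monochromatic diamond in every red/blue colouring of `Q_4`.

If `∅` and `[4]` have the same colour, two incomparable sets of that colour span a diamond with
them; otherwise its sets other than `[4]` form a chain, and a point `a` outside the top of the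
chain gives the diamond `{a} ⊂ {a, b}, {a, d} ⊂ {a, b, d}` in the other colour.

Otherwise, up to swapping the colours, `∅` is red and `[4]` is blue. Two red singletons `{x}, {y}`
would force `{x, y}` and both triples above it to be blue, so at most one singleton is red and,
dually under complementation, at most one triple is blue. A red triple whose three points are
blue singletons is impossible: two of its pairs have the same colour and span a red diamond with
`∅` and the triple, or a blue one with their common point and `[4]`. If `{r}` is red, pick `x ≠ r`
such that the two triples `{r, x, y}`, `{r, x, z}` are red; then `∅ ⊂ {r}, {x, y} ⊂ {r, x, y}`
forces `{x, y}` to be blue, likewise `{x, z}`, and with `{x}` and `[4]` they form a blue diamond.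

For the lower bound colour `Q_3` by the parity of the size: a copy of `Q_2` contains a chain
`A ⊂ B ⊂ C`, which would need `|C| ≥ |A| + 4`.
-/

open Finset

section Diamond

variable {P : Type*}

def IsDiamond [PartialOrder P] (w x y z : P) : Prop :=
  w ≤ x ∧ w ≤ y ∧ x ≤ z ∧ y ≤ z ∧ ¬x ≤ y ∧ ¬y ≤ x

def HasMonoDiamond [PartialOrder P] (c : P → Bool) (col : Bool) : Prop :=
  ∃ w x y z, IsDiamond w x y z ∧ c w = col ∧ c x = col ∧ c y = col ∧ c z = col

def DiamondFree [PartialOrder P] (c : P → Bool) : Prop :=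
  ∀ col, ¬HasMonoDiamond c col

theorem IsDiamond.compl [BooleanAlgebra P] {w x y z : P} (h : IsDiamond w x y z) :
    IsDiamond zᶜ xᶜ yᶜ wᶜ := by
  obtain ⟨hwx, hwy, hxz, hyz, hxy, hyx⟩ := h
  simp only [IsDiamond, compl_le_compl_iff_le]
  exact ⟨hxz, hyz, hwx, hwy, hyx, hxy⟩

theorem DiamondFree.not [PartialOrder P] {c : P → Bool} (hc : DiamondFree c) :
    DiamondFree fun p => !c p := by
  rintro col ⟨w, x, y, z, hd, hw, hx, hy, hz⟩
  exact hc (!col)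
    ⟨w, x, y, z, hd, by simp [← hw], by simp [← hx], by simp [← hy], by simp [← hz]⟩

theorem DiamondFree.not_compl [BooleanAlgebra P] {c : P → Bool} (hc : DiamondFree c) :
    DiamondFree fun p => !c pᶜ := by
  rintro col ⟨w, x, y, z, hd, hw, hx, hy, hz⟩
  exact hc (!col) ⟨zᶜ, xᶜ, yᶜ, wᶜ, hd.compl, by simp [← hz], by simp [← hx], by simp [← hy],
    by simp [← hw]⟩

end Diamond

def diamondMap {β : Type*} (w x y z : β) (A : Finset (Fin 2)) : β :=
  if 0 ∈ A then (if 1 ∈ A then z else x) else (if 1 ∈ A then y else w)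

theorem IsDiamond.isCubeEmb_diamondMap {N : ℕ} {w x y z : Finset (Fin N)}
    (h : IsDiamond w x y z) : IsCubeEmb (diamondMap w x y z) := by
  obtain ⟨hwx, hwy, hxz, hyz, hxy, hyx⟩ := h
  have hxw : ¬x ⊆ w := fun h => hxy (h.trans hwy)
  have hyw : ¬y ⊆ w := fun h => hyx (h.trans hwx)
  have hzx : ¬z ⊆ x := fun h => hyx (hyz.trans h)
  have hzy : ¬z ⊆ y := fun h => hxy (hxz.trans h)
  have hzw : ¬z ⊆ w := fun h => hzx (h.trans hwx)
  intro A B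
  fin_cases A <;> fin_cases B <;> simp_all [diamondMap, hwx.trans hxz] <;> decide

theorem HasMonoDiamond.exists_cubeEmb {N : ℕ} {c : Finset (Fin N) → Bool} {col : Bool}
    (h : HasMonoDiamond c col) :
    ∃ f : Finset (Fin 2) → Finset (Fin N), IsCubeEmb f ∧ ∀ A, c (f A) = col := by
  obtain ⟨w, x, y, z, hd, hw, hx, hy, hz⟩ := h
  refine ⟨diamondMap w x y z, hd.isCubeEmb_diamondMap, fun A => ?_⟩
  unfold diamondMap
  split_ifs <;> assumption

theorem fin4_exists_two_others {a b : Fin 4} (hab : a ≠ b) :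
    ∃ x y : Fin 4, x ≠ y ∧ a ≠ x ∧ a ≠ y ∧ b ≠ x ∧ b ≠ y := by
  revert a b; decide

theorem fin4_exists_three_others (a : Fin 4) :
    ∃ x y z : Fin 4, x ≠ y ∧ x ≠ z ∧ y ≠ z ∧ a ≠ x ∧ a ≠ y ∧ a ≠ z := by
  revert a; decide

namespace DiamondFree

/- The triples of `Fin 4` are written `{w}ᶜ`, so that the duality `DiamondFree.not_compl`
exchanges them with the singletons. -/

variable {c : Finset (Fin 4) → Bool}

theorem apply_empty_ne_apply_univ (hc : DiamondFree c) : c ∅ ≠ c univ := by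
  intro htop
  set col := c ∅
  have hcomparable : ∀ S T, c S = col → c T = col → ¬S ⊆ T → T ⊆ S := by
    intro S T hS hT hST
    by_contra hTS
    exact hc col ⟨∅, S, T, univ, ⟨empty_subset S, empty_subset T, subset_univ S, subset_univ T,
      hST, hTS⟩, rfl, hS, hT, htop.symm⟩
  -- the `col`-coloured sets other than `univ` form a chain, with top `M`
  obtain ⟨M, hM, hMmax⟩ := (univ.filter fun S => c S = col ∧ S ≠ univ).exists_max_image card
    ⟨∅, by simp [col, univ_nonempty.ne_empty.symm]⟩
  simp only [mem_filter, mem_univ, true_and] at hM hMmax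
  obtain ⟨a, haM⟩ : ∃ a, a ∉ M := by simpa [eq_univ_iff_forall] using hM.2
  obtain ⟨b, d, e, hbd, hbe, hde, hab, had, hae⟩ := fin4_exists_three_others a
  have hother_col : ∀ S, a ∈ S → e ∉ S → c S = !col := by
    intro S haS heS
    refine Bool.eq_not_of_ne fun hS => ?_
    have hSuniv : S ≠ univ := ne_of_mem_of_not_mem' (mem_univ e) heS |>.symm
    have hMS : M ⊂ S := ssubset_of_subset_of_ne (hcomparable S M hS hM.1 fun h => haM (h haS))
      (by rintro rfl; exact haM haS)
    exact (hMmax S ⟨hS, hSuniv⟩).not_gt (card_lt_card hMS)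
  refine hc (!col) ⟨{a}, {a, b}, {a, d}, {a, b, d}, ?_, ?_, ?_, ?_, ?_⟩
  · simp [IsDiamond, insert_subset_iff, hab, had, hbd, hab.symm, had.symm, hbd.symm]
  all_goals exact hother_col _ (by simp) (by simp [hae.symm, hbe.symm, hde.symm])

theorem eq_of_red_singleton (hc : DiamondFree c) (hbot : c ∅ = true) (htop : c univ = false)
    {x y : Fin 4} (hx : c {x} = true) (hy : c {y} = true) : x = y := by
  by_contra hxy
  have hblue : ∀ S, {x, y} ⊆ S → c S = false := fun S hS => Bool.of_not_eq_true fun hS' =>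
    hc true ⟨∅, {x}, {y}, S, by
      rw [insert_subset_iff, singleton_subset_iff] at hS
      simp [IsDiamond, hS, hxy, Ne.symm hxy], hbot, hx, hy, hS'⟩
  obtain ⟨u, v, huv, hxu, hxv, hyu, hyv⟩ := fin4_exists_two_others hxy
  exact hc false ⟨{x, y}, {u, x, y}, {v, x, y}, univ,
    by simp [IsDiamond, insert_subset_iff, eq_comm, huv, hxu, hxv, hyu, hyv],
    hblue _ subset_rfl, hblue _ (subset_insert _ _), hblue _ (subset_insert _ _), htop⟩

theorem pair_red_of_blue_singleton (hc : DiamondFree c) (htop : c univ = false)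
    {x y z : Fin 4} (hxy : x ≠ y) (hxz : x ≠ z) (hyz : y ≠ z) (hx : c {x} = false)
    (hxy' : c {x, y} = false) : c {x, z} = true :=
  Bool.of_not_eq_false fun hxz' => hc false ⟨{x}, {x, y}, {x, z}, univ,
    by simp [IsDiamond, insert_subset_iff, eq_comm, hxy, hxz, hyz], hx, hxy', hxz', htop⟩

theorem pair_blue_of_red_triple (hc : DiamondFree c) (hbot : c ∅ = true) {w x y z : Fin 4}
    (hwx : w ≠ x) (hwy : w ≠ y) (hwz : w ≠ z) (hxy : x ≠ y) (hxz : x ≠ z) (hyz : y ≠ z)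
    (hw : c {w}ᶜ = true) (hxy' : c {x, y} = true) : c {x, z} = false :=
  Bool.of_not_eq_true fun hxz' => hc true ⟨∅, {x, y}, {x, z}, {w}ᶜ,
    by simp [IsDiamond, insert_subset_iff, eq_comm, hwx, hwy, hwz, hxy, hxz, hyz],
    hbot, hxy', hxz', hw⟩

theorem pair_blue_of_red_singleton_triple (hc : DiamondFree c) (hbot : c ∅ = true)
    {r x y z : Fin 4} (hrx : r ≠ x) (hry : r ≠ y) (hrz : r ≠ z) (hxz : x ≠ z) (hyz : y ≠ z)
    (hr : c {r} = true) (hz : c {z}ᶜ = true) : c {x, y} = false :=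
  Bool.of_not_eq_true fun hxy => hc true ⟨∅, {r}, {x, y}, {z}ᶜ,
    by simp [IsDiamond, insert_subset_iff, -subset_singleton_iff, eq_comm, hrx, hry, hrz, hxz, hyz],
    hbot, hr, hxy, hz⟩

theorem false_of_red_triple (hc : DiamondFree c) (hbot : c ∅ = true)
    (htop : c univ = false) {w : Fin 4} (hw : c {w}ᶜ = true) (hs : ∀ t ≠ w, c {t} = false) :
    False := by
  obtain ⟨x, y, z, hxy, hxz, hyz, hwx, hwy, hwz⟩ := fin4_exists_three_others w
  cases hpxy : c {x, y}
  · have hpxz := hc.pair_red_of_blue_singleton htop hxy hxz hyz (hs x hwx.symm) hpxy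
    have hpyz := hc.pair_red_of_blue_singleton htop hxy.symm hyz hxz (hs y hwy.symm)
      (by rwa [pair_comm])
    have hpyz' : c {y, z} = false := by
      rw [pair_comm]
      exact hc.pair_blue_of_red_triple hbot hwz hwx hwy hxz.symm hyz.symm hxy hw
        (by rwa [pair_comm])
    simp [hpyz'] at hpyz
  · have hpxz := hc.pair_blue_of_red_triple hbot hwx hwy hwz hxy hxz hyz hw hpxy
    have hpyz := hc.pair_blue_of_red_triple hbot hwy hwx hwz hxy.symm hyz hxz hw
      (by rwa [pair_comm])
    have hpyz' : c {y, z} = true := by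
      rw [pair_comm]
      exact hc.pair_red_of_blue_singleton htop hxz.symm hyz.symm hxy (hs z hwz.symm)
        (by rwa [pair_comm])
    simp [hpyz'] at hpyz

theorem false_of_red_singleton (hc : DiamondFree c) (hbot : c ∅ = true) (htop : c univ = false)
    {r x : Fin 4} (hxr : x ≠ r) (hr : c {r} = true) (hx : c {x} = false)
    (hT : ∀ t, t ≠ r → t ≠ x → c {t}ᶜ = true) : False := by
  obtain ⟨y, z, hyz, hry, hrz, hxy, hxz⟩ := fin4_exists_two_others hxr.symm
  have hpxy := hc.pair_blue_of_red_singleton_triple hbot hxr.symm hry hrz hxz hyz hr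
    (hT z hrz.symm hxz.symm)
  have hpxz := hc.pair_blue_of_red_singleton_triple hbot hxr.symm hrz hry hxy hyz.symm hr
    (hT y hry.symm hxy.symm)
  simp [hc.pair_red_of_blue_singleton htop hxy hxz hyz hx hpxy] at hpxz

theorem false_of_red_empty_blue_univ (hc : DiamondFree c) (hbot : c ∅ = true)
    (htop : c univ = false) : False := by
  have heq_of_blue_triple : ∀ {v w : Fin 4}, c {v}ᶜ = false → c {w}ᶜ = false → v = w :=
    fun hv hw => hc.not_compl.eq_of_red_singleton (by simpa using htop) (by simpa using hbot)
      (by simpa using hv) (by simpa using hw)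
  by_cases hred : ∃ r, c {r} = true
  · obtain ⟨r, hr⟩ := hred
    obtain ⟨x, hxr, hT⟩ : ∃ x ≠ r, ∀ t, t ≠ r → t ≠ x → c {t}ᶜ = true := by
      by_cases hblue : ∃ b ≠ r, c {b}ᶜ = false
      · obtain ⟨b, hbr, hb⟩ := hblue
        exact ⟨b, hbr, fun t _ htb =>
          Bool.of_not_eq_false fun ht => htb (heq_of_blue_triple ht hb)⟩
      · push Not at hblue
        obtain ⟨x, hxr⟩ := exists_ne r
        exact ⟨x, hxr, fun t htr _ => by simpa using hblue t htr⟩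
    exact hc.false_of_red_singleton hbot htop hxr hr
      (Bool.of_not_eq_true fun hx => hxr (hc.eq_of_red_singleton hbot htop hx hr)) hT
  · push Not at hred
    obtain ⟨w, hw⟩ : ∃ w, c {w}ᶜ = true := by
      by_contra! h
      exact zero_ne_one (heq_of_blue_triple (by simpa using h 0) (by simpa using h 1))
    exact hc.false_of_red_triple hbot htop hw fun t _ => by simpa using hred t

end DiamondFree

theorem not_diamondFree (c : Finset (Fin 4) → Bool) : ¬DiamondFree c := by
  intro hc
  have hne := hc.apply_empty_ne_apply_univ
  cases hbot : c ∅
  · exact hc.not.false_of_red_empty_blue_univ (by simp [hbot]) (by simpa [hbot] using hne)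
  · exact hc.false_of_red_empty_blue_univ hbot (by simpa [hbot] using hne)

def parityColoring {α : Type*} (S : Finset α) : Bool := decide (Even S.card)

theorem IsCubeEmb.ssubset {n N : ℕ} {f : Finset (Fin n) → Finset (Fin N)} (hf : IsCubeEmb f)
    {A B : Finset (Fin n)} (h : A ⊂ B) : f A ⊂ f B :=
  ssubset_def.2 ⟨(hf A B).1 h.subset, fun h' => h.not_subset ((hf B A).2 h')⟩

theorem card_add_four_le_of_parityColoring_eq {α : Type*} {A B C : Finset α} (hAB : A ⊂ B)
    (hBC : B ⊂ C) (hA : parityColoring A = parityColoring B)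
    (hC : parityColoring B = parityColoring C) : #A + 4 ≤ #C := by
  have := card_lt_card hAB
  have := card_lt_card hBC
  simp only [parityColoring, decide_eq_decide, Nat.even_iff] at hA hC
  omega

theorem not_exists_mono_cubeEmb_parityColoring {N : ℕ} (hN : N ≤ 3) :
    ¬∃ (col : Bool) (f : Finset (Fin 2) → Finset (Fin N)),
      IsCubeEmb f ∧ ∀ A, parityColoring (f A) = col := by
  rintro ⟨col, f, hf, hcol⟩
  have hcard := card_add_four_le_of_parityColoring_eq
    (hf.ssubset (by decide : (∅ : Finset (Fin 2)) ⊂ {0}))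
    (hf.ssubset (by decide : ({0} : Finset (Fin 2)) ⊂ univ))
    ((hcol _).trans (hcol _).symm) ((hcol _).trans (hcol _).symm)
  have := card_le_univ (f univ)
  simp only [Fintype.card_fin] at this
  omega

theorem cubeRamseyProp_self_iff {n N : ℕ} :
    CubeRamseyProp n n N ↔ ∀ c : Finset (Fin N) → Bool,
      ∃ (col : Bool) (f : Finset (Fin n) → Finset (Fin N)),
        IsCubeEmb f ∧ ∀ A, c (f A) = col := by
  refine forall_congr' fun c => ⟨?_, ?_⟩
  · rintro (⟨f, hf, hc⟩ | ⟨f, hf, hc⟩)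
    exacts [⟨true, f, hf, hc⟩, ⟨false, f, hf, hc⟩]
  · rintro ⟨_ | _, f, hf, hc⟩
    exacts [Or.inr ⟨f, hf, hc⟩, Or.inl ⟨f, hf, hc⟩]

/-- Every red/blue coloring of `Q_4` has a monochromatic copy of `Q_2`, and some
red/blue coloring of `Q_3` has none. Hence `R(Q_2, Q_2) = 4`. -/
theorem RQ2Q2_eq_four :
    (∀ c : Finset (Fin 4) → Bool,
      ∃ (col : Bool) (f : Finset (Fin 2) → Finset (Fin 4)),
        IsCubeEmb f ∧ ∀ A, c (f A) = col) ∧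
    (∃ c : Finset (Fin 3) → Bool,
      ¬ ∃ (col : Bool) (f : Finset (Fin 2) → Finset (Fin 3)),
          IsCubeEmb f ∧ ∀ A, c (f A) = col) ∧
    posetRamsey 2 2 = 4 := by
  have upper : ∀ c : Finset (Fin 4) → Bool,
      ∃ (col : Bool) (f : Finset (Fin 2) → Finset (Fin 4)), IsCubeEmb f ∧ ∀ A, c (f A) = col :=
    fun c =>
    let ⟨col, h⟩ := not_forall_not.1 (not_diamondFree c)
    ⟨col, h.exists_cubeEmb⟩
  have h4 : CubeRamseyProp 2 2 4 := cubeRamseyProp_self_iff.2 upper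
  refine ⟨upper, ⟨parityColoring, not_exists_mono_cubeEmb_parityColoring le_rfl⟩,
    le_antisymm (Nat.sInf_le h4) (le_csInf ⟨4, h4⟩ fun N hN => ?_)⟩
  by_contra! hN4
  exact not_exists_mono_cubeEmb_parityColoring (by omega)
    (cubeRamseyProp_self_iff.1 hN parityColoring)
end

section
/- Let N(n) = n + 2(n+1)⌈log₂ n⌉. Then the proportion, among all 2^{2^{N(n)}} red/blue colorings of the Boolean lattice Q_{N(n)}, of those colorings that contain a monochromatic copy of Q_n tends to 1 as n → ∞. (Equivalently, a uniformly random red/blue coloring of Q_{N(n)} contains a monochromatic copy of Q_n asymptotically almost surely.) -/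
/-- Ground-set size `N(n) = n + 2(n+1)⌈log₂ n⌉`. -/
def blobDim (n : ℕ) : ℕ := n + 2 * (n + 1) * Nat.clog 2 n

/-!
Split the coordinates of `Q_N` into `n` trace coordinates and `n + 1` blocks of `m` coordinates.
Given a coloring, define `f A` by recursion on `#A` as `A ∪ ⋃_{B ⊊ A} Y_B ∪ Y_A`, where `Y_B`
lies in block number `#B` and `Y_A` is chosen to make `f A` red. The trace of `f A` on the first
`n` coordinates is `A`, so `f` is an embedding of `Q_n`. The choice at `A` fails only if `2 ^ m`
distinct points of trace `A` are all blue; which points these are is decided by the colors of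
points whose trace is a proper subset of `A`, so this happens for a `2 ^ (-2 ^ m)` fraction of
colorings. A union bound over the `2 ^ n` sets `A`, with `2 ^ m ≥ n ^ 2`, finishes the proof.
-/

open Finset

theorem card_forall_mem_eq_false_mul_le {α : Type*} [Fintype α]
    (F : (α → Bool) → Finset α) (K : ℕ) (hK : ∀ c, #(F c) = K)
    (hF : ∀ c c', (∀ p ∉ F c, c' p = c p) → F c' = F c) :
    Nat.card {c : α → Bool // ∀ p ∈ F c, c p = false} * 2 ^ K ≤ 2 ^ Fintype.card α := by
  classical
  -- Overwriting `c` on `F c` leaves `F c` unchanged by `hF`, so the overwrite can be undone.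
  let Bad := {c : α → Bool // ∀ p ∈ F c, c p = false}
  let overwrite : (Σ c : Bad, F c.1 → Bool) → α → Bool := fun x p =>
    if h : p ∈ F x.1.1 then x.2 ⟨p, h⟩ else x.1.1 p
  have overwrite_eq_off (x) : ∀ p ∉ F x.1.1, overwrite x p = x.1.1 p := fun p hp => dif_neg hp
  have hinj : Function.Injective overwrite := by
    rintro ⟨⟨c, hc⟩, v⟩ ⟨⟨c', hc'⟩, v'⟩ h
    have hFF : F c = F c' := by
      rw [← hF c _ (overwrite_eq_off ⟨⟨c, hc⟩, v⟩), h, hF c' _ (overwrite_eq_off ⟨⟨c', hc'⟩, v'⟩)]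
    obtain rfl : c = c' := funext fun p => by
      by_cases hp : p ∈ F c
      · rw [hc p hp, hc' p (hFF ▸ hp)]
      · simpa [overwrite, hp, ← hFF] using congrFun h p
    obtain rfl : v = v' := funext fun q => by simpa [overwrite, q.2] using congrFun h q
    rfl
  calc Nat.card Bad * 2 ^ K
      = Fintype.card (Σ c : Bad, F c.1 → Bool) := by
        simp [Nat.card_eq_fintype_card, Fintype.card_sigma, hK]
    _ ≤ Fintype.card (α → Bool) := Fintype.card_le_of_injective _ hinj
    _ = 2 ^ Fintype.card α := by simp

lemma card_subtype_add_card_subtype_not {α : Type*} [Finite α] (p : α → Prop) :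
    Nat.card {x // p x} + Nat.card {x // ¬ p x} = Nat.card α := by
  classical
  rw [← Nat.card_sum, Nat.card_congr (Equiv.sumCompl p)]

namespace MonoCube

variable {α : Type*} {n m : ℕ} (e : Fin n ⊕ Fin (n + 1) × Fin m ↪ α)

def level (A : Finset (Fin n)) : Fin (n + 1) :=
  ⟨#A, Nat.lt_succ_of_le (by simpa using card_le_univ A)⟩

def lift (A : Finset (Fin n)) : Finset α := A.map (Function.Embedding.inl.trans e)

def block (k : Fin (n + 1)) (y : Finset (Fin m)) : Finset α :=
  y.map ((Function.Embedding.sectR k _).trans (Function.Embedding.inr.trans e))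

variable {e}

@[simp]
lemma mem_lift {A : Finset (Fin n)} {x : Fin n ⊕ Fin (n + 1) × Fin m} :
    e x ∈ lift e A ↔ ∃ a ∈ A, .inl a = x := by
  simp [lift]

@[simp]
lemma mem_block {k : Fin (n + 1)} {y : Finset (Fin m)} {x : Fin n ⊕ Fin (n + 1) × Fin m} :
    e x ∈ block e k y ↔ ∃ j ∈ y, .inr (k, j) = x := by
  simp [block]

variable (e) [DecidableEq α]

def trace (p : Finset α) : Finset (Fin n) := {a | e (.inl a) ∈ p}

def candidate (A : Finset (Fin n)) (L : Finset α) (y : Finset (Fin m)) : Finset α :=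
  lift e A ∪ L ∪ block e (level A) y

/-- When no `y` makes the candidate red, `Classical.epsilon` returns an arbitrary `y`. -/
noncomputable def greedy (c : Finset α → Bool) : Finset (Fin n) → Finset (Fin m)
  | A => Classical.epsilon fun y =>
      c (candidate e A (A.ssubsets.attach.biUnion fun B => block e (level B.1) (greedy c B.1))
        y) = true
termination_by A => #A
decreasing_by exact card_lt_card (mem_ssubsets.mp B.2)

noncomputable def below (c : Finset α → Bool) (A : Finset (Fin n)) : Finset α :=
  A.ssubsets.biUnion fun B => block e (level B) (greedy e c B)

noncomputable def cubeMap (c : Finset α → Bool) (A : Finset (Fin n)) : Finset α :=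
  lift e A ∪ A.powerset.biUnion fun B => block e (level B) (greedy e c B)

variable {e}

@[simp]
lemma mem_trace {p : Finset α} {a : Fin n} : a ∈ trace e p ↔ e (.inl a) ∈ p := by
  simp [trace]

lemma trace_mono : Monotone (trace e) :=
  fun _ _ h _ ha => mem_trace.mpr (h (mem_trace.mp ha))

lemma greedy_eq (c : Finset α → Bool) (A : Finset (Fin n)) :
    greedy e c A = Classical.epsilon fun y => c (candidate e A (below e c A) y) = true := by
  rw [greedy, below, attach_biUnion (f := fun B => block e (level B) (greedy e c B))]

lemma cubeMap_eq_candidate (c : Finset α → Bool) (A : Finset (Fin n)) :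
    cubeMap e c A = candidate e A (below e c A) (greedy e c A) := by
  have hpow : A.powerset = insert A A.ssubsets := (insert_erase (mem_powerset_self A)).symm
  rw [cubeMap, hpow, biUnion_insert, candidate, below]
  ac_rfl

lemma inl_notMem_below (c : Finset α → Bool) (A : Finset (Fin n)) (a : Fin n) :
    e (.inl a) ∉ below e c A := by
  simp [below]

lemma trace_candidate (c : Finset α → Bool) (A : Finset (Fin n)) (y : Finset (Fin m)) :
    trace e (candidate e A (below e c A) y) = A := by
  ext a
  simp [candidate, inl_notMem_below]

lemma inr_mem_candidate_iff (c : Finset α → Bool) (A : Finset (Fin n)) (y : Finset (Fin m))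
    (j : Fin m) : e (.inr (level A, j)) ∈ candidate e A (below e c A) y ↔ j ∈ y := by
  have hlevel : ∀ B ⊂ A, level B ≠ level A := fun B hB h =>
    (card_lt_card hB).ne (congrArg Fin.val h)
  simp +contextual [candidate, below, hlevel]

lemma candidate_injective (c : Finset α → Bool) (A : Finset (Fin n)) :
    Function.Injective (candidate e A (below e c A)) := fun y y' h => by
  ext j
  rw [← inr_mem_candidate_iff c A, h, inr_mem_candidate_iff]

lemma greedy_congr {c c' : Finset α → Bool} (B : Finset (Fin n))
    (h : ∀ p, trace e p ⊆ B → c' p = c p) : greedy e c' B = greedy e c B := by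
  induction B using Finset.strongInduction with
  | H B ih =>
    have hbelow : below e c' B = below e c B :=
      biUnion_congr rfl fun B' hB' => by
        rw [ih B' (mem_ssubsets.mp hB') fun p hp => h p (hp.trans (mem_ssubsets.mp hB').subset)]
    simp only [greedy_eq, hbelow]
    congr! 3 with y
    exact h _ (trace_candidate c B y).subset

lemma below_congr {c c' : Finset α → Bool} (A : Finset (Fin n))
    (h : ∀ p, trace e p ⊂ A → c' p = c p) : below e c' A = below e c A :=
  biUnion_congr rfl fun B hB => by
    rw [greedy_congr B fun p hp => h p (lt_of_le_of_lt hp (mem_ssubsets.mp hB))]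

variable (e)

noncomputable def cubeEmb (c : Finset α → Bool) : Finset (Fin n) ↪o Finset α :=
  OrderEmbedding.ofMapLEIff (cubeMap e c) fun A B => by
    refine ⟨fun h => ?_, fun h => ?_⟩
    · simpa only [cubeMap_eq_candidate, trace_candidate] using trace_mono (e := e) h
    · exact union_subset_union (map_subset_map.mpr h)
        (biUnion_subset_biUnion_of_subset_left _ (powerset_mono.mpr h))

def IsStuckAt (c : Finset α → Bool) (A : Finset (Fin n)) : Prop :=
  ∀ y, c (candidate e A (below e c A) y) = false

lemma cubeMap_eq_true {c : Finset α → Bool} (h : ∀ A, ¬ IsStuckAt e c A) (A : Finset (Fin n)) :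
    c (cubeMap e c A) = true := by
  rw [cubeMap_eq_candidate, greedy_eq]
  exact Classical.epsilon_spec (by simpa [IsStuckAt] using h A)

variable [Fintype α]

lemma card_isStuckAt_mul_le (A : Finset (Fin n)) :
    Nat.card {c // IsStuckAt e c A} * 2 ^ 2 ^ m ≤ 2 ^ 2 ^ Fintype.card α := by
  have key := card_forall_mem_eq_false_mul_le
    (fun c => univ.image (candidate e A (below e c A))) (2 ^ m)
    (fun c => by simp [card_image_of_injective _ (candidate_injective c A)])
    (fun c c' h => by
      rw [below_congr A fun p hp => h p ?_]
      rintro hmem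
      obtain ⟨y, -, rfl⟩ := mem_image.mp hmem
      exact hp.ne (trace_candidate c A y))
  simpa [IsStuckAt, Fintype.card_finset] using key

lemma card_exists_isStuckAt_mul_le :
    Nat.card {c // ∃ A, IsStuckAt e c A} * 2 ^ 2 ^ m ≤ 2 ^ n * 2 ^ 2 ^ Fintype.card α := by
  classical
  calc Nat.card {c // ∃ A, IsStuckAt e c A} * 2 ^ 2 ^ m
      ≤ (∑ A : Finset (Fin n), Nat.card {c // IsStuckAt e c A}) * 2 ^ 2 ^ m := by
        gcongr
        simp only [Nat.card_eq_fintype_card, Fintype.card_subtype]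
        exact (card_le_card fun c hc => by simpa using hc).trans card_biUnion_le
    _ ≤ ∑ _A : Finset (Fin n), 2 ^ 2 ^ Fintype.card α := by
        rw [sum_mul]
        exact sum_le_sum fun A _ => card_isStuckAt_mul_le e A
    _ = 2 ^ n * 2 ^ 2 ^ Fintype.card α := by simp

end MonoCube

def HasMonoCube (n : ℕ) {N : ℕ} (c : Finset (Fin N) → Bool) : Prop :=
  ∃ (col : Bool) (f : Finset (Fin n) → Finset (Fin N)), IsCubeEmb f ∧ ∀ A, c (f A) = col

open MonoCube in
theorem card_not_hasMonoCube_mul_le {n m N : ℕ} (h : n + (n + 1) * m ≤ N) :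
    Nat.card {c : Finset (Fin N) → Bool // ¬ HasMonoCube n c} * 2 ^ 2 ^ m ≤
      2 ^ n * 2 ^ 2 ^ N := by
  obtain ⟨e⟩ := Function.Embedding.nonempty_of_card_le
    (α := Fin n ⊕ Fin (n + 1) × Fin m) (β := Fin N) (by simpa using h)
  have hstuck (c : Finset (Fin N) → Bool) (hc : ¬ HasMonoCube n c) : ∃ A, IsStuckAt e c A := by
    by_contra! hne
    exact hc ⟨true, cubeMap e c, fun A B => (cubeEmb e c).le_iff_le.symm, cubeMap_eq_true e hne⟩
  calc _ ≤ Nat.card {c // ∃ A, IsStuckAt e c A} * 2 ^ 2 ^ m := by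
        gcongr
        exact Nat.card_le_card_of_injective _ (Subtype.impEmbedding _ _ hstuck).injective
    _ ≤ 2 ^ n * 2 ^ 2 ^ N := by simpa using card_exists_isStuckAt_mul_le e

theorem card_not_hasMonoCube_mul_two_pow_le {n : ℕ} (hn : 2 ≤ n) :
    Nat.card {c : Finset (Fin (blobDim n)) → Bool // ¬ HasMonoCube n c} * 2 ^ n ≤
      2 ^ 2 ^ blobDim n := by
  have hbound := card_not_hasMonoCube_mul_le (n := n) (m := 2 * Nat.clog 2 n)
    (N := blobDim n) (le_of_eq (by rw [blobDim]; ring))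
  have hexp : 2 ^ n * 2 ^ n ≤ 2 ^ 2 ^ (2 * Nat.clog 2 n) := by
    have hsq : n * n ≤ 2 ^ (2 * Nat.clog 2 n) := by
      rw [two_mul, pow_add]
      exact Nat.mul_le_mul (Nat.le_pow_clog one_lt_two n) (Nat.le_pow_clog one_lt_two n)
    rw [← pow_add]
    exact Nat.pow_le_pow_right two_pos (by nlinarith)
  refine Nat.le_of_mul_le_mul_left ?_ (pow_pos two_pos n)
  calc 2 ^ n * (_ * 2 ^ n) = _ * (2 ^ n * 2 ^ n) := by ring
    _ ≤ _ := (Nat.mul_le_mul_left _ hexp).trans hbound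

theorem tendsto_card_not_hasMonoCube_div :
    Filter.Tendsto (fun n => (Nat.card {c : Finset (Fin (blobDim n)) → Bool //
      ¬ HasMonoCube n c} : ℝ) / 2 ^ 2 ^ blobDim n) Filter.atTop (nhds 0) := by
  refine squeeze_zero' (.of_forall fun n => by positivity) ?_
    (tendsto_pow_atTop_nhds_zero_of_lt_one (by norm_num : (0 : ℝ) ≤ 1 / 2) (by norm_num))
  filter_upwards [Filter.eventually_ge_atTop 2] with n hn
  rw [div_le_iff₀ (by positivity), div_pow, one_pow, div_mul_eq_mul_div, one_mul,
    le_div_iff₀ (by positivity)]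
  exact_mod_cast card_not_hasMonoCube_mul_two_pow_le hn

/-- The proportion, among all `2^(2^(N(n)))` red/blue colorings of `Q_{N(n)}`
with `N(n) = n + 2(n+1)⌈log₂ n⌉`, of those containing a monochromatic copy of
`Q_n` tends to `1` as `n → ∞`: a uniformly random red/blue coloring of
`Q_{N(n)}` contains a monochromatic copy of `Q_n` asymptotically almost surely. -/
theorem random_coloring_mono_cube_aas :
    Filter.Tendsto
      (fun n : ℕ =>
        (Nat.card {c : Finset (Fin (blobDim n)) → Bool //
            ∃ (col : Bool) (f : Finset (Fin n) → Finset (Fin (blobDim n))),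
              IsCubeEmb f ∧ ∀ A, c (f A) = col} : ℝ) / 2 ^ (2 ^ blobDim n))
      Filter.atTop (nhds 1) := by
  have hsplit (n : ℕ) :
      1 - (Nat.card {c : Finset (Fin (blobDim n)) → Bool // ¬ HasMonoCube n c} : ℝ) /
        2 ^ 2 ^ blobDim n =
      (Nat.card {c : Finset (Fin (blobDim n)) → Bool // HasMonoCube n c} : ℝ) /
        2 ^ 2 ^ blobDim n := by
    have htotal := card_subtype_add_card_subtype_not (HasMonoCube n (N := blobDim n))
    rw [Nat.card_fun] at htotal
    rw [sub_eq_iff_eq_add, ← add_div, ← Nat.cast_add, htotal]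
    simp
  have hlim := (tendsto_const_nhds (x := (1 : ℝ))).sub tendsto_card_not_hasMonoCube_div
  simp only [hsplit, sub_zero] at hlim
  exact hlim
end

section
/- (Layered Lemma) For every integer n ≥ 0 there exists an integer N such that for every red/blue coloring c of the subsets of [N] there is a set S ⊆ [N] with |S| = n on which c is layered, i.e., for each i with 0 ≤ i ≤ n, all i-element subsets of S receive the same color. -/
/-!
Induct on the number of layers. If `c` is layered up to level `k - 1` on every large
enough set, first use the finite Ramsey theorem for `k`-uniform hypergraphs to pass to a
large set on which all `k`-subsets have one color, then find inside it a set layered up to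
level `k - 1`; the `k`-subsets of that set still have one color. Ramsey's theorem itself
is proved by the classical double induction: remove a point `x`, color the `r`-sets `A`
of the rest by `c (insert x A)`, and recurse.
-/

open Finset

universe u

section Monochromatic

variable {α : Type u} {c : Finset α → Bool} {r : ℕ} {S T : Finset α} {b : Bool}

def IsMonochromatic (c : Finset α → Bool) (r : ℕ) (S : Finset α) (b : Bool) : Prop :=
  ∀ A ⊆ S, #A = r → c A = b

theorem IsMonochromatic.mono (h : IsMonochromatic c r T b) (hST : S ⊆ T) :
    IsMonochromatic c r S b :=
  fun A hA => h A (hA.trans hST)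

theorem isMonochromatic_zero (c : Finset α → Bool) (S : Finset α) :
    IsMonochromatic c 0 S (c ∅) := by
  intro A _ hA
  rw [card_eq_zero.mp hA]

theorem isMonochromatic_of_card_lt (hS : #S < r) (b : Bool) : IsMonochromatic c r S b := by
  intro A hA hAr
  have := card_le_card hA
  omega

theorem IsMonochromatic.insert [DecidableEq α] (x : α) (hT : IsMonochromatic c (r + 1) T b)
    (hlink : IsMonochromatic (fun A => c (insert x A)) r T b) :
    IsMonochromatic c (r + 1) (insert x T) b := by
  intro A hA hAr
  rw [subset_insert_iff] at hA
  by_cases hxA : x ∈ A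
  · rw [← insert_erase hxA]
    exact hlink _ hA (by rw [card_erase_of_mem hxA, hAr]; rfl)
  · rw [erase_eq_of_notMem hxA] at hA
    exact hT A hA hAr

end Monochromatic

/-- The arrow relation `N → (s true, s false)^r` of Erdős and Rado. -/
def RamseyArrow (N r : ℕ) (s : Bool → ℕ) : Prop :=
  ∀ {α : Type u} [DecidableEq α] (V : Finset α) (c : Finset α → Bool), N ≤ #V →
    ∃ b, ∃ S ⊆ V, #S = s b ∧ IsMonochromatic c r S b

theorem ramseyArrow_zero (s : Bool → ℕ) : RamseyArrow.{u} (s true + s false) 0 s := by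
  intro α _ V c hV
  obtain ⟨S, hSV, hS⟩ := exists_subset_card_eq (s := V) (n := s (c ∅))
    (by cases c ∅ <;> omega)
  exact ⟨c ∅, S, hSV, hS, isMonochromatic_zero c S⟩

theorem ramseyArrow_of_le {r : ℕ} {s : Bool → ℕ} {b : Bool} (hb : s b ≤ r) :
    RamseyArrow.{u} (s b) (r + 1) s := by
  intro α _ V c hV
  obtain ⟨S, hSV, hS⟩ := exists_subset_card_eq hV
  exact ⟨b, S, hSV, hS, isMonochromatic_of_card_lt (by omega) b⟩

theorem ramseyArrow_succ {N r : ℕ} {s M : Bool → ℕ} (hs : ∀ b, 0 < s b)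
    (hlink : RamseyArrow.{u} N r M)
    (hM : ∀ b, RamseyArrow.{u} (M b) (r + 1) (Function.update s b (s b - 1))) :
    RamseyArrow.{u} (N + 1) (r + 1) s := by
  intro α _ V c hV
  obtain ⟨x, hx⟩ : V.Nonempty := card_pos.mp (by omega)
  obtain ⟨b, S', hS'V, hS', hS'link⟩ :=
    hlink (V.erase x) (fun A => c (insert x A)) (by rw [card_erase_of_mem hx]; omega)
  obtain ⟨b', T, hTS', hT, hTmono⟩ := hM b S' c hS'.ge
  by_cases hbb' : b' = b
  · subst hbb'
    have hxT : x ∉ T := fun h => notMem_erase x V (hS'V (hTS' h))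
    refine ⟨b', insert x T, insert_subset hx ((hTS'.trans hS'V).trans (erase_subset x V)), ?_,
      hTmono.insert x (hS'link.mono hTS')⟩
    have := hs b'
    rw [card_insert_of_notMem hxT, hT, Function.update_self]
    omega
  · refine ⟨b', T, (hTS'.trans hS'V).trans (erase_subset x V), ?_, hTmono⟩
    rwa [Function.update_of_ne hbb'] at hT

theorem exists_ramseyArrow (r : ℕ) (s : Bool → ℕ) : ∃ N, RamseyArrow.{u} N r s := by
  induction r generalizing s with
  | zero => exact ⟨_, ramseyArrow_zero s⟩
  | succ r ih =>
    induction hm : s true + s false using Nat.strong_induction_on generalizing s with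
    | _ m ihm =>
      by_cases hsmall : ∃ b, s b ≤ r
      · obtain ⟨b, hb⟩ := hsmall
        exact ⟨_, ramseyArrow_of_le hb⟩
      push Not at hsmall
      have hdecr : ∀ b, Function.update s b (s b - 1) true +
          Function.update s b (s b - 1) false < m := by
        intro b
        have := hsmall true
        have := hsmall false
        cases b <;> simp <;> omega
      choose M hM using fun b => ihm _ (hdecr b) _ rfl
      obtain ⟨N, hN⟩ := ih M
      exact ⟨N + 1, ramseyArrow_succ (fun b => by have := hsmall b; omega) hN hM⟩

theorem exists_layered_below (n k : ℕ) : ∃ N, ∀ {α : Type u} [DecidableEq α]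
    (V : Finset α) (c : Finset α → Bool), N ≤ #V →
      ∃ S ⊆ V, #S = n ∧ ∀ i < k, ∃ b, IsMonochromatic c i S b := by
  induction k with
  | zero =>
    refine ⟨n, fun V c hV => ?_⟩
    obtain ⟨S, hSV, hS⟩ := exists_subset_card_eq hV
    exact ⟨S, hSV, hS, fun i hi => absurd hi (Nat.not_lt_zero i)⟩
  | succ k ih =>
    obtain ⟨Nk, hNk⟩ := ih
    obtain ⟨N, hN⟩ := exists_ramseyArrow.{u} k (fun _ => Nk)
    refine ⟨N, fun V c hV => ?_⟩
    obtain ⟨b, S', hS'V, hS', hS'mono⟩ := hN V c hV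
    obtain ⟨S, hSS', hS, hlayers⟩ := hNk S' c hS'.ge
    refine ⟨S, hSS'.trans hS'V, hS, fun i hi => ?_⟩
    rcases Nat.lt_succ_iff_lt_or_eq.mp hi with hik | rfl
    · exact hlayers i hik
    · exact ⟨b, hS'mono.mono hSS'⟩

/-- Layered Lemma: for every `n` there is `N` such that every red/blue coloring
`c` of the subsets of an `N`-element set admits an `n`-element set `S` on which
`c` is layered, i.e. subsets of `S` of equal size get equal colors. -/
theorem layered_lemma (n : ℕ) :
    ∃ N : ℕ, ∀ c : Finset (Fin N) → Bool,
      ∃ S : Finset (Fin N), S.card = n ∧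
        ∀ A B : Finset (Fin N), A ⊆ S → B ⊆ S → A.card = B.card → c A = c B := by
  obtain ⟨N, hN⟩ := exists_layered_below.{0} n (n + 1)
  refine ⟨N, fun c => ?_⟩
  obtain ⟨S, -, hS, hlayers⟩ := hN univ c (by simp)
  refine ⟨S, hS, fun A B hA hB hAB => ?_⟩
  obtain ⟨b, hb⟩ := hlayers #A (Nat.lt_succ_of_le (hS ▸ card_le_card hA))
  rw [hb A hA rfl, hb B hB hAB.symm]
end

section
/- (Blob Lemma, embedding part) Let P be a finite poset, let n be an integer such that P admits an embedding into the Boolean lattice Q_n, let h be the number of elements in a largest chain of P, and let m ≥ 1 be an integer. Then the Boolean lattice Q_{n + h·m} contains a copy of the lexicographic product P × Q_m. -/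
/-!
Split the ground set of `Q_{n + h·m}` into `n` coordinates carrying the embedding `e` of `P` and
`h` levels, each a copy of the ground set of `Q_m`. Give `p ∈ P` its height `r p < h`, and send
`(p, S)` to `e p` together with all levels below `r p` and the set `S` on level `r p`. Heights
increase strictly along `<`, so `p < q` makes the level part of `(p, S)` lie below that of
`(q, T)` whatever `S` and `T` are, while for `p = q` the level parts compare as `S` and `T` do;
the `e`-part already decides `p ≤ q`.
-/

open Finset

lemma LTSeries.length_lt_of_isChain_card_le {P : Type*} [Preorder P] {h : ℕ}
    (hchain : ∀ C : Finset P, IsChain (· ≤ ·) (C : Set P) → C.card ≤ h) (q : LTSeries P) :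
    q.length < h := by
  classical
  have hchain_range : IsChain (· ≤ ·) ((univ.image q : Finset P) : Set P) := by
    rw [coe_image, coe_univ, Set.image_univ]
    exact q.strictMono.monotone.isChain_range
  have hcard : (univ.image q).card = q.length + 1 := by
    rw [card_image_of_injective _ q.strictMono.injective, card_univ, Fintype.card_fin]
  have := hchain _ hchain_range
  omega

lemma Order.height_lt_of_isChain_card_le {P : Type*} [Preorder P] {h : ℕ}
    (hchain : ∀ C : Finset P, IsChain (· ≤ ·) (C : Set P) → C.card ≤ h) (p : P) :
    Order.height p < h := by
  obtain ⟨k, rfl⟩ : ∃ k, h = k + 1 := Nat.exists_eq_add_one.2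
    (LTSeries.length_lt_of_isChain_card_le hchain (RelSeries.singleton _ p))
  have hle : Order.height p ≤ k := Order.height_le fun q _ ↦ by
    exact_mod_cast Nat.le_of_lt_succ (q.length_lt_of_isChain_card_le hchain)
  exact hle.trans_lt (by exact_mod_cast k.lt_succ_self)

lemma exists_strictMono_fin_of_isChain_card_le {P : Type*} [Preorder P] {h : ℕ}
    (hchain : ∀ C : Finset P, IsChain (· ≤ ·) (C : Set P) → C.card ≤ h) :
    ∃ r : P → Fin h, StrictMono r := by
  have hlt := Order.height_lt_of_isChain_card_le hchain
  have hcoe (p : P) : ((Order.height p).toNat : ℕ∞) = Order.height p :=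
    ENat.natCast_toNat (hlt p).ne_top
  refine ⟨fun p ↦ ⟨(Order.height p).toNat, ?_⟩, fun p q hpq ↦ ?_⟩
  · exact_mod_cast (hcoe p).trans_lt (hlt p)
  · have := Order.height_strictMono hpq ((hlt p).trans (ENat.natCast_lt_top h))
    rw [← hcoe p, ← hcoe q] at this
    exact Fin.mk_lt_mk.2 (by exact_mod_cast this)

section LevelBlock

variable {ι β : Type*} [LinearOrder ι] [Fintype ι] [Fintype β] [DecidableEq β]

def levelBlock (k : ι) (S : Finset β) : Finset (ι × β) :=
  {x | x.1 < k ∨ x.1 = k ∧ x.2 ∈ S}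

lemma levelBlock_subset_levelBlock_of_lt {k l : ι} (hkl : k < l) (S T : Finset β) :
    levelBlock k S ⊆ levelBlock l T := by
  intro x hx
  simp only [levelBlock, mem_filter, mem_univ, true_and] at hx ⊢
  rcases hx with hx | ⟨hx, -⟩
  · exact Or.inl (hx.trans hkl)
  · exact Or.inl (hx ▸ hkl)

lemma levelBlock_subset_levelBlock_iff {k : ι} {S T : Finset β} :
    levelBlock k S ⊆ levelBlock k T ↔ S ⊆ T := by
  simp only [levelBlock, subset_iff, mem_filter, mem_univ, true_and, Prod.forall]
  constructor
  · intro H s hs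
    simpa using H k s (Or.inr ⟨rfl, hs⟩)
  · rintro H i s (hi | ⟨hi, hs⟩)
    · exact Or.inl hi
    · exact Or.inr ⟨hi, H hs⟩

theorem lex_iff_disjSum_levelBlock_subset {P α : Type*} [PartialOrder P]
    (e : P → Finset α) (he : ∀ x y : P, x ≤ y ↔ e x ⊆ e y) (r : P → ι) (hr : StrictMono r)
    (a b : P × Finset β) :
    (a.1 < b.1 ∨ a.1 = b.1 ∧ a.2 ⊆ b.2) ↔
      (e a.1).disjSum (levelBlock (r a.1) a.2) ⊆ (e b.1).disjSum (levelBlock (r b.1) b.2) := by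
  obtain ⟨p, S⟩ := a
  obtain ⟨q, T⟩ := b
  rw [disjSum_subset, toLeft_disjSum, toRight_disjSum, ← he]
  constructor
  · rintro (hpq | ⟨rfl, hST⟩)
    · exact ⟨hpq.le, levelBlock_subset_levelBlock_of_lt (hr hpq) S T⟩
    · exact ⟨le_rfl, levelBlock_subset_levelBlock_iff.2 hST⟩
  · rintro ⟨hpq, hblock⟩
    rcases hpq.eq_or_lt with rfl | hlt
    · exact Or.inr ⟨rfl, levelBlock_subset_levelBlock_iff.1 hblock⟩
    · exact Or.inl hlt

end LevelBlock

theorem blob_lemma_embedding_general {P : Type*} [PartialOrder P]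
    (n h m : ℕ)
    (hemb : ∃ e : P → Finset (Fin n), ∀ x y : P, x ≤ y ↔ e x ⊆ e y)
    (hchain_le : ∀ C : Finset P, IsChain (· ≤ ·) (C : Set P) → C.card ≤ h) :
    ∃ g : P × Finset (Fin m) → Finset (Fin (n + h * m)),
      ∀ a b : P × Finset (Fin m),
        (a.1 < b.1 ∨ (a.1 = b.1 ∧ a.2 ⊆ b.2)) ↔ g a ⊆ g b := by
  obtain ⟨e, he⟩ := hemb
  obtain ⟨r, hr⟩ := exists_strictMono_fin_of_isChain_card_le hchain_le
  let coords : Fin n ⊕ Fin h × Fin m ≃ Fin (n + h * m) :=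
    (Equiv.sumCongr (Equiv.refl _) finProdFinEquiv).trans finSumFinEquiv
  refine ⟨fun a ↦ ((e a.1).disjSum (levelBlock (r a.1) a.2)).map coords.toEmbedding,
    fun a b ↦ ?_⟩
  rw [map_subset_map]
  exact lex_iff_disjSum_levelBlock_subset e he r hr a b

/-- Blob Lemma (embedding part): if a finite poset `P` embeds into `Q_n` and
every chain in `P` has at most `h` elements, with some chain having exactly
`h` elements, then for every `m ≥ 1` the Boolean lattice `Q_{n + h·m}` contains
a copy of the lexicographic product `P × Q_m`, ordered by
`(p₁,q₁) ≤ (p₂,q₂)` iff `p₁ < p₂`, or `p₁ = p₂` and `q₁ ⊆ q₂`. -/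
theorem blob_lemma_embedding {P : Type*} [PartialOrder P] [Fintype P]
    (n h m : ℕ) (hm : 1 ≤ m)
    (hemb : ∃ e : P → Finset (Fin n), ∀ x y : P, x ≤ y ↔ e x ⊆ e y)
    (hchain_le : ∀ C : Finset P, IsChain (· ≤ ·) (C : Set P) → C.card ≤ h)
    (hchain_eq : ∃ C : Finset P, IsChain (· ≤ ·) (C : Set P) ∧ C.card = h) :
    ∃ g : P × Finset (Fin m) → Finset (Fin (n + h * m)),
      ∀ a b : P × Finset (Fin m),
        (a.1 < b.1 ∨ (a.1 = b.1 ∧ a.2 ⊆ b.2)) ↔ g a ⊆ g b :=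
  blob_lemma_embedding_general n h m hemb hchain_le
end

section
/- (Blob Lemma, Ramsey part) Let P be a finite poset, let n be an integer such that P admits an embedding into the Boolean lattice Q_n, let h be the number of elements in a largest chain of P, and let m ≥ 1 be an integer. Then every red/blue coloring of Q_{n + h·m} contains a red copy of P or a blue copy of Q_m. In particular, R(P, Q_m) ≤ dim₂(P) + h(P)·m. -/
/-- The 2-dimension of a poset `P`: the smallest `n` such that `P` embeds
into the Boolean lattice `Q_n`. -/
noncomputable def dimTwo (P : Type*) [PartialOrder P] : ℕ :=
  sInf {n | ∃ e : P → Finset (Fin n), ∀ x y : P, x ≤ y ↔ e x ⊆ e y}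

/-- The poset Ramsey number `R(P, Q_m)`: the smallest `N` such that every
red/blue coloring of `Q_N` contains a red copy of `P` or a blue copy of `Q_m`. -/
noncomputable def posetRamseyCube (P : Type*) [PartialOrder P] (m : ℕ) : ℕ :=
  sInf {N | ∀ c : Finset (Fin N) → Bool,
    (∃ e : P → Finset (Fin N), (∀ x y : P, x ≤ y ↔ e x ⊆ e y) ∧ ∀ x, c (e x) = true) ∨
    (∃ f : Finset (Fin m) → Finset (Fin N), IsCubeEmb f ∧ ∀ A, c (f A) = false)}

open Finset

/-- The arrow relation `Finset α → (P, Q)` of poset Ramsey theory. -/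
def PowersetArrows (α P Q : Type*) [PartialOrder P] [PartialOrder Q] : Prop :=
  ∀ c : Finset α → Bool,
    (∃ e : P → Finset α, (∀ x y : P, x ≤ y ↔ e x ⊆ e y) ∧ ∀ x, c (e x) = true) ∨
    (∃ f : Q → Finset α, (∀ A B : Q, A ≤ B ↔ f A ⊆ f B) ∧ ∀ A, c (f A) = false)

theorem PowersetArrows.of_embedding {α β P Q : Type*} [PartialOrder P] [PartialOrder Q]
    (ψ : α ↪ β) (hα : PowersetArrows α P Q) : PowersetArrows β P Q := by
  intro c
  rcases hα (c ∘ map ψ) with ⟨e, he, hc⟩ | ⟨f, hf, hc⟩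
  · exact Or.inl ⟨fun x => (e x).map ψ, by simpa only [map_subset_map] using he, hc⟩
  · exact Or.inr ⟨fun A => (f A).map ψ, by simpa only [map_subset_map] using hf, hc⟩

theorem exists_strictMono_fin_of_forall_chain_card_le {P : Type*} [PartialOrder P] {h : ℕ}
    (hchain : ∀ C : Finset P, IsChain (· ≤ ·) (C : Set P) → C.card ≤ h) :
    ∃ ℓ : P → Fin h, StrictMono ℓ := by
  classical
  have hlength : ∀ p : LTSeries P, p.length < h := by
    intro p
    have hchain_image : IsChain (· ≤ ·) ((univ.image p : Finset P) : Set P) := by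
      rw [coe_image, coe_univ, Set.image_univ]
      exact p.strictMono.monotone.isChain_range
    have := hchain _ hchain_image
    rw [card_image_of_injective _ p.strictMono.injective, card_univ, Fintype.card_fin] at this
    omega
  have hheight : ∀ x : P, Order.height x < h := by
    intro x
    by_contra! hx
    obtain ⟨p, -, hp⟩ := Order.exists_series_of_le_height x hx
    exact (hlength p).ne hp
  have hfinite : ∀ x : P, ((Order.height x).toNat : ℕ∞) = Order.height x :=
    fun x => ENat.natCast_toNat (hheight x).ne_top
  refine ⟨fun x => ⟨(Order.height x).toNat, ?_⟩, fun x y hxy => ?_⟩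
  · exact_mod_cast (hfinite x).trans_lt (hheight x)
  · have := Order.height_strictMono hxy ((hheight x).trans (ENat.natCast_lt_top h))
    rw [← hfinite x, ← hfinite y] at this
    exact_mod_cast this

section Layer

variable {β γ : Type*} [LinearOrder β] [LocallyFiniteOrderBot β] [Fintype γ] [DecidableEq γ]

/-- In `β × γ`, read as `β` stacked copies of `γ`: all copies below `b` full, copy `b` equal
to `S`, and the copies above `b` empty. -/
def layer (b : β) (S : Finset γ) : Finset (β × γ) :=
  Iio b ×ˢ univ ∪ {b} ×ˢ S

theorem layer_subset_layer_of_lt {b b' : β} (hb : b < b') (S S' : Finset γ) :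
    layer b S ⊆ layer b' S' := by
  rintro ⟨i, j⟩ hij
  simp only [layer, mem_union, mem_product, mem_Iio, mem_univ, and_true, mem_singleton]
    at hij ⊢
  rcases hij with hi | ⟨rfl, -⟩
  · exact Or.inl (hi.trans hb)
  · exact Or.inl hb

theorem layer_subset_layer_iff {b : β} {S S' : Finset γ} :
    layer b S ⊆ layer b S' ↔ S ⊆ S' := by
  refine ⟨fun h j hj => ?_,
    fun h => union_subset_union subset_rfl (product_subset_product_right h)⟩
  have : (b, j) ∈ layer b S' := h (by simp [layer, hj])
  simpa [layer] using this

end Layer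

theorem powersetArrows_sum_prod {α β γ P : Type*} [LinearOrder β] [LocallyFiniteOrderBot β]
    [Fintype γ] [DecidableEq γ] [PartialOrder P] (e : P → Finset α)
    (he : ∀ x y : P, x ≤ y ↔ e x ⊆ e y) (ℓ : P → β) (hℓ : StrictMono ℓ) :
    PowersetArrows (α ⊕ β × γ) P (Finset γ) := by
  intro c
  let blob (x : P) (S : Finset γ) : Finset (α ⊕ β × γ) := (e x).disjSum (layer (ℓ x) S)
  have blob_subset_blob_iff {x y : P} {S T : Finset γ} :
      blob x S ⊆ blob y T ↔ e x ⊆ e y ∧ layer (ℓ x) S ⊆ layer (ℓ y) T := by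
    simp only [blob, disjSum_subset, toLeft_disjSum, toRight_disjSum]
  by_cases hblue : ∃ x, ∀ S, c (blob x S) = false
  · obtain ⟨x, hx⟩ := hblue
    refine Or.inr ⟨blob x, fun S T => ?_, hx⟩
    simp only [blob_subset_blob_iff, subset_rfl, true_and, layer_subset_layer_iff]
  · push Not at hblue
    choose S hS using hblue
    refine Or.inl ⟨fun x => blob x (S x), fun x y => ⟨fun hxy => ?_, fun hsub => ?_⟩,
      fun x => by simpa using hS x⟩
    · obtain rfl | hlt := hxy.eq_or_lt
      · exact subset_rfl
      · exact blob_subset_blob_iff.2 ⟨(he x y).1 hxy, layer_subset_layer_of_lt (hℓ hlt) _ _⟩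
    · exact (he x y).2 (blob_subset_blob_iff.1 hsub).1

theorem powersetArrows_fin {P : Type*} [PartialOrder P] {n h : ℕ} (m : ℕ)
    (hemb : ∃ e : P → Finset (Fin n), ∀ x y : P, x ≤ y ↔ e x ⊆ e y)
    (hchain : ∀ C : Finset P, IsChain (· ≤ ·) (C : Set P) → C.card ≤ h) :
    PowersetArrows (Fin (n + h * m)) P (Finset (Fin m)) := by
  obtain ⟨e, he⟩ := hemb
  obtain ⟨ℓ, hℓ⟩ := exists_strictMono_fin_of_forall_chain_card_le hchain
  have ψ : Fin n ⊕ Fin h × Fin m ≃ Fin (n + h * m) :=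
    (Equiv.sumCongr (Equiv.refl _) finProdFinEquiv).trans finSumFinEquiv
  exact (powersetArrows_sum_prod e he ℓ hℓ).of_embedding ψ.toEmbedding

theorem blob_lemma_ramsey_general {P : Type*} [PartialOrder P]
    (n h m : ℕ)
    (hemb : ∃ e : P → Finset (Fin n), ∀ x y : P, x ≤ y ↔ e x ⊆ e y)
    (hchain_le : ∀ C : Finset P, IsChain (· ≤ ·) (C : Set P) → C.card ≤ h) :
    (∀ c : Finset (Fin (n + h * m)) → Bool,
      (∃ e : P → Finset (Fin (n + h * m)),
          (∀ x y : P, x ≤ y ↔ e x ⊆ e y) ∧ ∀ x, c (e x) = true) ∨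
      (∃ f : Finset (Fin m) → Finset (Fin (n + h * m)),
          IsCubeEmb f ∧ ∀ A, c (f A) = false)) ∧
    posetRamseyCube P m ≤ dimTwo P + h * m := by
  have hdim :
      dimTwo P ∈ {k | ∃ e : P → Finset (Fin k), ∀ x y : P, x ≤ y ↔ e x ⊆ e y} :=
    Nat.sInf_mem ⟨n, hemb⟩
  exact ⟨powersetArrows_fin m hemb hchain_le,
    Nat.sInf_le (powersetArrows_fin m hdim hchain_le)⟩

/-- Blob Lemma (Ramsey part): if the finite poset `P` embeds into `Q_n`, every
chain of `P` has at most `h` elements and some chain has exactly `h` elements,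
then for `m ≥ 1` every red/blue coloring of `Q_{n + h·m}` contains a red copy
of `P` or a blue copy of `Q_m`; in particular `R(P, Q_m) ≤ dim₂(P) + h·m`. -/
theorem blob_lemma_ramsey {P : Type*} [PartialOrder P] [Fintype P]
    (n h m : ℕ) (hm : 1 ≤ m)
    (hemb : ∃ e : P → Finset (Fin n), ∀ x y : P, x ≤ y ↔ e x ⊆ e y)
    (hchain_le : ∀ C : Finset P, IsChain (· ≤ ·) (C : Set P) → C.card ≤ h)
    (hchain_eq : ∃ C : Finset P, IsChain (· ≤ ·) (C : Set P) ∧ C.card = h) :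
    (∀ c : Finset (Fin (n + h * m)) → Bool,
      (∃ e : P → Finset (Fin (n + h * m)),
          (∀ x y : P, x ≤ y ↔ e x ⊆ e y) ∧ ∀ x, c (e x) = true) ∨
      (∃ f : Finset (Fin m) → Finset (Fin (n + h * m)),
          IsCubeEmb f ∧ ∀ A, c (f A) = false)) ∧
    posetRamseyCube P m ≤ dimTwo P + h * m :=
  blob_lemma_ramsey_general n h m hemb hchain_le
end

section
/- (Antichain Lemma) Let ℓ < N and suppose the red elements of a red/blue coloring of the power set 2^{[N]} form antichains 𝒜₁, …, 𝒜_ℓ such that for each i = 1, …, ℓ, the family 𝒜ᵢ is the set of minimal elements of 𝒜ᵢ ∪ 𝒜_{i+1} ∪ ⋯ ∪ 𝒜_ℓ. Then 2^{[N]} contains a blue copy of the Boolean lattice Q_{N−ℓ}, that is, a copy of Q_{N−ℓ} all of whose elements avoid 𝒜₁ ∪ ⋯ ∪ 𝒜_ℓ. -/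
/-!
Keep the first `N - ℓ` coordinates free and use the last `ℓ` as a ladder: a set `S` of free
coordinates spans the chain `x₀ ⊂ x₁ ⊂ ⋯ ⊂ x_ℓ`, where `x_k` is `S` together with the first `k`
ladder coordinates. Send `S` to `x_K`, where `K` is the first level such that no member of `𝒜_K`
lies below `x_K` (level `ℓ` always qualifies). No `𝒜ⱼ` with `j < K` contains `x_K`, since `𝒜ⱼ`
has a member below `x_j ⊂ x_K`, so `x_K` is not minimal. No `𝒜ⱼ` with `j ≥ K` contains it
either: the minimality condition makes the set of levels `i` at which `𝒜ᵢ` has a member below a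
given set downward closed, and level `K` is not one of them. Enlarging `S` enlarges every `x_k`,
hence `K`, so `S ↦ x_K` is monotone, and it reflects inclusion because `x_K` meets the free
coordinates in `S`.
-/

open Finset

def IsMinimalLayering {ι β : Type*} [Preorder ι] [LE β] (A : ι → Set β) : Prop :=
  ∀ i S, S ∈ A i ↔ Minimal (fun T => ∃ j, i ≤ j ∧ T ∈ A j) S

theorem exists_mem_le_of_minimal_layers {ι β : Type*} [Preorder ι] [PartialOrder β]
    [WellFoundedLT β] {A : ι → Set β}
    (hmin : IsMinimalLayering A)
    {i j : ι} (hij : i ≤ j) {a X : β} (ha : a ∈ A j) (haX : a ≤ X) :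
    ∃ b ∈ A i, b ≤ X := by
  obtain ⟨b, hba, hb⟩ := exists_minimal_le_of_wellFoundedLT (fun T => ∃ j, i ≤ j ∧ T ∈ A j) a
    ⟨j, hij, ha⟩
  exact ⟨b, (hmin i b).2 hb, hba.trans haX⟩

section FirstFreeLevel

variable {β : Type*} [PartialOrder β] {l : ℕ} {A : Fin l → Set β} {x y : ℕ → β} {k : ℕ}

def IsBlockedAt (A : Fin l → Set β) (k : ℕ) (X : β) : Prop :=
  ∃ h : k < l, ∃ a ∈ A ⟨k, h⟩, a ≤ X

noncomputable def firstFreeLevel (A : Fin l → Set β) (x : ℕ → β) : ℕ :=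
  sInf {k | ¬IsBlockedAt A k (x k)}

theorem not_isBlockedAt_of_le {X : β} (hk : l ≤ k) : ¬IsBlockedAt A k X :=
  fun ⟨h, _⟩ => (h.trans_le hk).false

theorem firstFreeLevel_le : firstFreeLevel A x ≤ l :=
  Nat.sInf_le (not_isBlockedAt_of_le le_rfl)

theorem not_isBlockedAt_firstFreeLevel :
    ¬IsBlockedAt A (firstFreeLevel A x) (x (firstFreeLevel A x)) :=
  Nat.sInf_mem (s := {k | ¬IsBlockedAt A k (x k)}) ⟨l, not_isBlockedAt_of_le le_rfl⟩

theorem isBlockedAt_of_lt_firstFreeLevel (hk : k < firstFreeLevel A x) :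
    IsBlockedAt A k (x k) :=
  not_not.mp (Nat.notMem_of_lt_sInf hk)

theorem firstFreeLevel_mono (hxy : x ≤ y) : firstFreeLevel A x ≤ firstFreeLevel A y :=
  Nat.sInf_le fun ⟨h, a, ha, hax⟩ =>
    not_isBlockedAt_firstFreeLevel ⟨h, a, ha, hax.trans (hxy _)⟩

theorem apply_firstFreeLevel_notMem [WellFoundedLT β]
    (hmin : IsMinimalLayering A)
    (hx : StrictMonoOn x (Set.Iic l)) (j : Fin l) : x (firstFreeLevel A x) ∉ A j := by
  intro hX
  rcases lt_or_ge (j : ℕ) (firstFreeLevel A x) with hjK | hKj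
  · obtain ⟨_, a, ha, hax⟩ := isBlockedAt_of_lt_firstFreeLevel hjK
    have hlt : x j < x (firstFreeLevel A x) :=
      hx (Set.mem_Iic.2 j.isLt.le) (Set.mem_Iic.2 firstFreeLevel_le) hjK
    exact ((hmin j _).1 hX).not_lt ⟨j, le_rfl, ha⟩ (hax.trans_lt hlt)
  · have hKl : firstFreeLevel A x < l := hKj.trans_lt j.isLt
    obtain ⟨b, hb, hbX⟩ :=
      exists_mem_le_of_minimal_layers hmin (i := ⟨_, hKl⟩) hKj hX le_rfl
    exact not_isBlockedAt_firstFreeLevel ⟨hKl, b, hb, hbX⟩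

end FirstFreeLevel

section Ladder

variable {N n : ℕ} {S S' : Finset (Fin n)} {k k' : ℕ}

def ladder (N n : ℕ) (S : Finset (Fin n)) (k : ℕ) : Finset (Fin N) :=
  {x | (∃ h : (x : ℕ) < n, ⟨x, h⟩ ∈ S) ∨ (n ≤ x ∧ x < n + k)}

theorem mem_ladder {x : Fin N} :
    x ∈ ladder N n S k ↔ (∃ h : (x : ℕ) < n, ⟨x, h⟩ ∈ S) ∨ (n ≤ x ∧ x < n + k) := by
  simp [ladder]

theorem ladder_mono (hS : S ⊆ S') (hk : k ≤ k') : ladder N n S k ⊆ ladder N n S' k' := by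
  intro x
  simp only [mem_ladder]
  rintro (⟨h, hx⟩ | hx)
  · exact Or.inl ⟨h, hS hx⟩
  · exact Or.inr (by omega)

theorem ladder_strictMonoOn {l : ℕ} (h : n + l ≤ N) :
    StrictMonoOn (ladder N n S) (Set.Iic l) := by
  intro k _ k' hk' hkk'
  have hk'l : k' ≤ l := Set.mem_Iic.1 hk'
  have hnew : (⟨n + k, by omega⟩ : Fin N) ∈ ladder N n S k' \ ladder N n S k := by
    simp only [mem_sdiff, mem_ladder, not_or, not_exists]
    refine ⟨Or.inr ⟨by omega, by omega⟩, fun hlt => absurd hlt (by omega), by omega⟩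
  exact ssubset_of_subset_not_subset (ladder_mono subset_rfl hkk'.le)
    fun hsub => (mem_sdiff.1 hnew).2 (hsub (mem_sdiff.1 hnew).1)

theorem subset_of_ladder_subset (hn : n ≤ N) (h : ladder N n S k ⊆ ladder N n S' k') :
    S ⊆ S' := by
  intro y hy
  have hx : (⟨y, by omega⟩ : Fin N) ∈ ladder N n S k := mem_ladder.2 (Or.inl ⟨y.isLt, hy⟩)
  rcases mem_ladder.1 (h hx) with ⟨_, hy'⟩ | hy'
  · exact hy'
  · exact absurd hy'.1 (not_le.2 y.isLt)

end Ladder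

theorem exists_isCubeEmb_forall_notMem {N n l : ℕ} (h : n + l ≤ N)
    {A : Fin l → Set (Finset (Fin N))}
    (hmin : IsMinimalLayering A) :
    ∃ f : Finset (Fin n) → Finset (Fin N), IsCubeEmb f ∧ ∀ S j, f S ∉ A j := by
  refine ⟨fun S => ladder N n S (firstFreeLevel A (ladder N n S)), fun S S' => ⟨fun hS => ?_,
    subset_of_ladder_subset (by omega)⟩, fun S => ?_⟩
  · exact ladder_mono hS (firstFreeLevel_mono fun k => ladder_mono hS le_rfl)
  · exact apply_firstFreeLevel_notMem hmin (ladder_strictMonoOn h)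

theorem antichain_lemma_general (N l : ℕ) (hl : l < N)
    (c : Finset (Fin N) → Bool)
    (A : Fin l → Set (Finset (Fin N)))
    (hred : ∀ S : Finset (Fin N), c S = true ↔ ∃ i, S ∈ A i)
    (hmin : ∀ i : Fin l,
      A i = {S | (∃ j, i ≤ j ∧ S ∈ A j) ∧
        ∀ T : Finset (Fin N), (∃ j, i ≤ j ∧ T ∈ A j) → T ⊆ S → T = S}) :
    ∃ f : Finset (Fin (N - l)) → Finset (Fin N),
      IsCubeEmb f ∧ ∀ S, c (f S) = false := by
  have hmin' : IsMinimalLayering A := by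
    intro i S
    rw [minimal_iff, hmin i]
    simp only [Set.mem_ofPred_eq, eq_comm]
  obtain ⟨f, hf, hblue⟩ := exists_isCubeEmb_forall_notMem (n := N - l) (by omega) hmin'
  refine ⟨f, hf, fun S => Bool.eq_false_iff.2 fun hred_S => ?_⟩
  obtain ⟨i, hi⟩ := (hred _).1 hred_S
  exact hblue S i hi

/-- Antichain Lemma: if in a red/blue coloring of `2^[N]` (red = `true`) the
red elements form antichains `𝒜₁, …, 𝒜_ℓ` with `ℓ < N`, where each `𝒜ᵢ` is the
set of minimal elements of `𝒜ᵢ ∪ ⋯ ∪ 𝒜_ℓ`, then there is a blue copy of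
`Q_{N-ℓ}`. -/
theorem antichain_lemma (N l : ℕ) (hl : l < N)
    (c : Finset (Fin N) → Bool)
    (A : Fin l → Set (Finset (Fin N)))
    (hred : ∀ S : Finset (Fin N), c S = true ↔ ∃ i, S ∈ A i)
    (hanti : ∀ i, IsAntichain (· ⊆ ·) (A i))
    (hmin : ∀ i : Fin l,
      A i = {S | (∃ j, i ≤ j ∧ S ∈ A j) ∧
        ∀ T : Finset (Fin N), (∃ j, i ≤ j ∧ T ∈ A j) → T ⊆ S → T = S}) :
    ∃ f : Finset (Fin (N - l)) → Finset (Fin N),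
      IsCubeEmb f ∧ ∀ S, c (f S) = false :=
  antichain_lemma_general N l hl c A hred hmin
end

section
/- Let n ≤ N, let e(n, N) denote the number of embeddings of the Boolean lattice Q_n into Q_N, and let a(n) denote the number of distinct antichains in 2^{[n]}. Then (N!/(N−n)!) · (a(n) − n)^{N−n} ≤ e(n, N) ≤ (N!/(N−n)!) · a(n)^{N−n}. -/
/-- `e(n, N)`: the number of embeddings of `Q_n` into `Q_N`. -/
noncomputable def cubeEmbCount (n N : ℕ) : ℕ :=
  Nat.card {f : Finset (Fin n) → Finset (Fin N) // IsCubeEmb f}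

/-- `a(n)`: the number of antichains in `2^[n]`. -/
noncomputable def antichainCount (n : ℕ) : ℕ :=
  Nat.card {A : Finset (Finset (Fin n)) // IsAntichain (· ⊆ ·) (A : Set (Finset (Fin n)))}

/-!
Reading off coordinates, a map `f : Q_n → Q_N` is the same as the family of sets
`U_i = {A | i ∈ f A}`, `i ∈ [N]`, and `f` is an embedding exactly when every `U_i` is an upset
and every principal upset `{A | j ∈ A}`, `j ∈ [n]`, occurs among them. So `e(n, N)` counts maps
from `[N]` to the upsets of `Q_n` (as many as antichains: take minimal elements) whose image
contains `n` prescribed values. Choosing injectively a coordinate for each prescribed value and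
then the remaining `N - n` values arbitrarily overcounts such maps (upper bound); choosing the
remaining values among the non-prescribed upsets produces distinct ones (lower bound).
-/

open Function Set

namespace Function.Embedding

variable {ι α β : Type*}

open Classical in
noncomputable def piecewiseRange (σ : ι ↪ α) (p : ι → β) (g : ↥(range σ)ᶜ → β) : α → β :=
  fun a => if h : a ∈ range σ then p ((Equiv.ofInjective σ σ.injective).symm ⟨a, h⟩) else g ⟨a, h⟩

variable (σ : ι ↪ α) (p : ι → β) (g : ↥(range σ)ᶜ → β)

@[simp]
lemma piecewiseRange_apply_self (k : ι) : σ.piecewiseRange p g (σ k) = p k := by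
  rw [piecewiseRange, dif_pos (mem_range_self k), Equiv.ofInjective_symm_apply]

lemma piecewiseRange_apply_of_notMem {a : α} (h : a ∉ range σ) :
    σ.piecewiseRange p g a = g ⟨a, h⟩ := by
  rw [piecewiseRange, dif_neg h]

lemma piecewiseRange_restrict {V : α → β} (hV : ∀ k, V (σ k) = p k) :
    σ.piecewiseRange p (fun a => V a) = V := by
  funext a
  by_cases h : a ∈ range σ
  · obtain ⟨k, rfl⟩ := h
    rw [piecewiseRange_apply_self, hV]
  · rw [piecewiseRange_apply_of_notMem _ _ _ h]

lemma piecewiseRange_injective : Injective (σ.piecewiseRange p) := fun g h he =>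
  funext fun a => by simpa only [piecewiseRange_apply_of_notMem _ _ _ a.2] using congrFun he a

end Function.Embedding

section CountingCovers

variable {ι α β : Type*} {p : ι → β}

lemma Nat.card_compl_range [Finite β] (hp : Injective p) :
    Nat.card ↥(range p)ᶜ = Nat.card β - Nat.card ι := by
  rw [Nat.card_coe_set_eq, ncard_compl, ncard_range_of_injective hp]

noncomputable def embeddingOfRangeSubset (hp : Injective p) {V : α → β}
    (hV : range p ⊆ range V) : ι ↪ α where
  toFun k := (hV (mem_range_self k)).choose
  inj' k k' h := hp <| by
    rw [← (hV (mem_range_self k)).choose_spec, ← (hV (mem_range_self k')).choose_spec]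
    exact congrArg V h

lemma apply_embeddingOfRangeSubset (hp : Injective p) {V : α → β}
    (hV : range p ⊆ range V) (k : ι) : V (embeddingOfRangeSubset hp hV k) = p k :=
  (hV (mem_range_self k)).choose_spec

lemma eq_of_piecewiseRange_eq (hp : Injective p) {σ τ : ι ↪ α}
    {g : ↥(range σ)ᶜ → β} {h : ↥(range τ)ᶜ → β} (hh : ∀ a, h a ∉ range p)
    (he : σ.piecewiseRange p g = τ.piecewiseRange p h) : σ = τ := by
  ext k
  have hσk : τ.piecewiseRange p h (σ k) = p k := by rw [← he, σ.piecewiseRange_apply_self]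
  by_cases hk : σ k ∈ range τ
  · obtain ⟨k', hk'⟩ := hk
    rw [← hk', τ.piecewiseRange_apply_self] at hσk
    rw [← hk', hp hσk]
  · rw [τ.piecewiseRange_apply_of_notMem _ _ hk] at hσk
    exact absurd ⟨k, hσk.symm⟩ (hh _)

variable [Fintype ι] [Fintype α]

lemma card_sigma_embedding_compl_range_arrow (γ : Type*) [Finite γ] :
    Nat.card (Σ σ : ι ↪ α, (↥(range σ)ᶜ → γ)) =
      (Fintype.card α).descFactorial (Fintype.card ι) *
        Nat.card γ ^ (Fintype.card α - Fintype.card ι) := by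
  simp only [Nat.card_sigma, Nat.card_fun, Nat.card_compl_range (Embedding.injective _),
    Finset.sum_const, Finset.card_univ, Fintype.card_embedding_eq, smul_eq_mul,
    Nat.card_eq_fintype_card]

lemma card_range_subset_range_le [Finite β] (hp : Injective p) :
    Nat.card {V : α → β // range p ⊆ range V} ≤
      (Fintype.card α).descFactorial (Fintype.card ι) *
        Nat.card β ^ (Fintype.card α - Fintype.card ι) := by
  rw [← card_sigma_embedding_compl_range_arrow]
  refine Nat.card_le_card_of_injective
    (fun V => ⟨embeddingOfRangeSubset hp V.2, fun a => V.1 a⟩) fun V W hVW => ?_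
  have hrecover : ∀ V : {V : α → β // range p ⊆ range V},
      (embeddingOfRangeSubset hp V.2).piecewiseRange p (fun a => V.1 a) = V.1 := fun V =>
    Embedding.piecewiseRange_restrict _ _ (apply_embeddingOfRangeSubset hp V.2)
  refine Subtype.ext ?_
  rw [← hrecover V, ← hrecover W]
  exact congrArg (fun σg : Σ σ : ι ↪ α, (↥(range σ)ᶜ → β) => σg.1.piecewiseRange p σg.2) hVW

lemma le_card_range_subset_range [Finite β] (hp : Injective p) :
      (Fintype.card α).descFactorial (Fintype.card ι) *
        (Nat.card β - Fintype.card ι) ^ (Fintype.card α - Fintype.card ι) ≤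
    Nat.card {V : α → β // range p ⊆ range V} := by
  rw [← Nat.card_eq_fintype_card (α := ι), ← Nat.card_compl_range hp, Nat.card_eq_fintype_card,
    ← card_sigma_embedding_compl_range_arrow]
  refine Nat.card_le_card_of_injective
    (fun σg => ⟨σg.1.piecewiseRange p (fun a => σg.2 a), ?_⟩) ?_
  · rintro _ ⟨k, rfl⟩
    exact ⟨σg.1 k, σg.1.piecewiseRange_apply_self _ _ k⟩
  · rintro ⟨σ, g⟩ ⟨τ, h⟩ he
    have he' : σ.piecewiseRange p (fun a => g a) = τ.piecewiseRange p (fun a => h a) :=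
      congrArg Subtype.val he
    obtain rfl := eq_of_piecewiseRange_eq hp (fun a => (h a).2) he'
    exact congrArg (Sigma.mk σ)
      ((σ.piecewiseRange_injective p).comp Subtype.val_injective.comp_left he')

end CountingCovers

def UpperSet.equivAntichain (α : Type*) [PartialOrder α] [WellFoundedLT α] :
    UpperSet α ≃ {s : Set α // IsAntichain (· ≤ ·) s} where
  toFun U := ⟨{x | Minimal (· ∈ U) x}, setOfPred_minimal_antichain _⟩
  invFun s := upperClosure s.1
  left_inv U := SetLike.ext fun x => mem_upperClosure.trans
    ⟨fun ⟨_, ha, hax⟩ => U.upper hax ha.prop, fun hx =>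
      let ⟨a, hax, ha⟩ := exists_minimal_le_of_wellFoundedLT _ x hx
      ⟨a, ha, hax⟩⟩
  right_inv s := Subtype.ext <| Set.ext fun _ => s.2.minimal_mem_upperClosure_iff_mem

lemma antichainCount_eq_card_upperSet (n : ℕ) :
    antichainCount n = Nat.card (UpperSet (Finset (Fin n))) :=
  Nat.card_congr <| (Equiv.subtypeEquiv Fintype.finsetEquivSet fun _ => Iff.rfl).trans
    (UpperSet.equivAntichain _).symm

variable {n N : ℕ}

namespace IsCubeEmb

variable {f : Finset (Fin n) → Finset (Fin N)}

lemma isUpperSet_setOf_mem (hf : IsCubeEmb f) (i : Fin N) : IsUpperSet {A | i ∈ f A} :=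
  fun _ _ hAB hi => (hf _ _).1 hAB hi

lemma exists_setOf_mem_eq_Ici (hf : IsCubeEmb f) (j : Fin n) :
    ∃ i, {A | i ∈ f A} = Set.Ici {j} := by
  have hj : ¬ {j} ⊆ ({j}ᶜ : Finset (Fin n)) := by simp
  obtain ⟨i, hij, hij'⟩ := Finset.not_subset.1 (mt (hf _ _).2 hj)
  refine ⟨i, Set.ext fun A => ⟨fun hiA => ?_, fun hjA => (hf _ _).1 hjA hij⟩⟩
  by_contra hjA
  have : A ⊆ {j}ᶜ := by simpa [Finset.subset_compl_comm] using hjA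
  exact hij' ((hf _ _).1 this hiA)

end IsCubeEmb

open Classical in
noncomputable def mapOfUpperSets (V : Fin N → UpperSet (Finset (Fin n))) :
    Finset (Fin n) → Finset (Fin N) :=
  fun A => Finset.univ.filter fun i => A ∈ V i

@[simp]
lemma mem_mapOfUpperSets {V : Fin N → UpperSet (Finset (Fin n))} {A : Finset (Fin n)}
    {i : Fin N} : i ∈ mapOfUpperSets V A ↔ A ∈ V i := by
  simp [mapOfUpperSets]

lemma isCubeEmb_mapOfUpperSets {V : Fin N → UpperSet (Finset (Fin n))}
    (hV : range (fun j : Fin n => UpperSet.Ici {j}) ⊆ range V) :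
    IsCubeEmb (mapOfUpperSets V) := by
  refine fun A B => ⟨fun hAB i hi => ?_, fun h j hj => ?_⟩
  · rw [mem_mapOfUpperSets] at hi ⊢
    exact (V i).upper hAB hi
  · obtain ⟨i, hi⟩ := hV (mem_range_self j)
    have hiB : B ∈ V i := mem_mapOfUpperSets.1 <| h <| mem_mapOfUpperSets.2 <| by
      simpa [hi] using hj
    simpa [hi] using hiB

noncomputable def cubeEmbEquivUpperSetFamily (n N : ℕ) :
    {f : Finset (Fin n) → Finset (Fin N) // IsCubeEmb f} ≃
      {V : Fin N → UpperSet (Finset (Fin n)) //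
        range (fun j : Fin n => UpperSet.Ici {j}) ⊆ range V} where
  toFun f := ⟨fun i => ⟨{A | i ∈ f.1 A}, f.2.isUpperSet_setOf_mem i⟩, by
    rintro _ ⟨j, rfl⟩
    obtain ⟨i, hi⟩ := f.2.exists_setOf_mem_eq_Ici j
    exact ⟨i, SetLike.coe_injective hi⟩⟩
  invFun V := ⟨mapOfUpperSets V.1, isCubeEmb_mapOfUpperSets V.2⟩
  left_inv f := by ext; simp
  right_inv V := by ext; simp

theorem cube_embedding_count_general (n N : ℕ) :
    N.descFactorial n * (antichainCount n - n) ^ (N - n) ≤ cubeEmbCount n N ∧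
    cubeEmbCount n N ≤ N.descFactorial n * antichainCount n ^ (N - n) := by
  have hIci : Injective fun j : Fin n => UpperSet.Ici ({j} : Finset (Fin n)) :=
    UpperSet.Ici_injective.comp Finset.singleton_injective
  rw [cubeEmbCount, Nat.card_congr (cubeEmbEquivUpperSetFamily n N), antichainCount_eq_card_upperSet]
  have lower := le_card_range_subset_range (α := Fin N) hIci
  have upper := card_range_subset_range_le (α := Fin N) hIci
  rw [Fintype.card_fin, Fintype.card_fin] at lower upper
  exact ⟨lower, upper⟩

/-- For `n ≤ N`, the number `e(n,N)` of embeddings of `Q_n` into `Q_N` satisfies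
`N!/(N−n)! · (a(n) − n)^{N−n} ≤ e(n,N) ≤ N!/(N−n)! · a(n)^{N−n}`, where `a(n)`
is the number of antichains in `2^[n]` and `N!/(N-n)!` is the descending
factorial. -/
theorem cube_embedding_count (n N : ℕ) (h : n ≤ N) :
    N.descFactorial n * (antichainCount n - n) ^ (N - n) ≤ cubeEmbCount n N ∧
    cubeEmbCount n N ≤ N.descFactorial n * antichainCount n ^ (N - n) :=
  cube_embedding_count_general n N
end

section
/- The map assigning to each embedding f of 2^{[n]} into 2^{[N]} its characteristic vector (U₁(f), …, U_N(f)), where U_j(f) = {S ⊆ [n] : j ∈ f(S)}, is a bijection between the set of all embeddings of 2^{[n]} into 2^{[N]} and the set of all good sequences of N upper-closed subsets of 2^{[n]}. -/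
/-- A family of subsets of `[n]` is upper closed. -/
def UpperClosed {n : ℕ} (U : Set (Finset (Fin n))) : Prop :=
  ∀ ⦃S T : Finset (Fin n)⦄, S ∈ U → S ⊆ T → T ∈ U

/-- A sequence `(U₁, …, U_N)` of subsets of `2^[n]` is good if every `U_j` is
upper closed and for every `i ∈ [n]` the upset `{i}⁺ = {S : i ∈ S}` occurs in
the sequence. -/
def GoodSeq {n N : ℕ} (U : Fin N → Set (Finset (Fin n))) : Prop :=
  (∀ j, UpperClosed (U j)) ∧
  ∀ i : Fin n, ∃ j : Fin N, U j = {S : Finset (Fin n) | i ∈ S}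

/-!
An embedding `f` is recovered from its characteristic vector, since `j ∈ f S` iff `S ∈ U_j(f)`;
conversely every sequence `U` defines `f S = {j | S ∈ U_j}`. Monotonicity of `f` corresponds to
the `U_j` being upper closed. Order reflection corresponds to goodness: for an embedding, any
`j ∈ f {i} \ f {i}ᶜ` has `U_j(f) = {i}⁺`, and if `U_j = {i}⁺` then `f A ⊆ f B` forces `i ∈ A → i ∈ B`.
-/

open Finset

section CharVec

variable {α β : Type*}

def charVec (f : Finset α → Finset β) (j : β) : Set (Finset α) :=
  {S | j ∈ f S}

open Classical in
noncomputable def ofCharVec [Fintype β] (U : β → Set (Finset α)) (S : Finset α) : Finset β :=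
  {j | S ∈ U j}.toFinset

@[simp]
lemma mem_ofCharVec [Fintype β] {U : β → Set (Finset α)} {S : Finset α} {j : β} :
    j ∈ ofCharVec U S ↔ S ∈ U j := by
  simp [ofCharVec]

lemma charVec_injective :
    Function.Injective (charVec : (Finset α → Finset β) → β → Set (Finset α)) :=
  fun _ _ h => funext fun S => Finset.ext fun j => Set.ext_iff.1 (congrFun h j) S

lemma charVec_ofCharVec [Fintype β] (U : β → Set (Finset α)) : charVec (ofCharVec U) = U := by
  ext j S
  exact mem_ofCharVec

end CharVec

variable {n N : ℕ}

lemma upperClosed_charVec_of_monotone {β : Type*} {f : Finset (Fin n) → Finset β}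
    (hf : Monotone f) (j : β) : UpperClosed (charVec f j) :=
  fun _ _ hS hST => hf hST hS

lemma IsCubeEmb.monotone {f : Finset (Fin n) → Finset (Fin N)} (hf : IsCubeEmb f) :
    Monotone f :=
  fun A B hAB => (hf A B).1 hAB

lemma IsCubeEmb.exists_charVec_eq_upset {f : Finset (Fin n) → Finset (Fin N)} (hf : IsCubeEmb f)
    (i : Fin n) : ∃ j, charVec f j = {S | i ∈ S} := by
  have h_not_subset : ¬ f {i} ⊆ f {i}ᶜ := fun h => by simpa using (hf _ _).2 h
  obtain ⟨j, hj_mem, hj_not_mem⟩ := Finset.not_subset.1 h_not_subset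
  refine ⟨j, Set.ext fun S => ⟨fun hjS => ?_, fun hiS => ?_⟩⟩
  · by_contra hiS
    exact hj_not_mem ((hf S _).1 (subset_compl_singleton.2 hiS) hjS)
  · exact (hf _ S).1 (singleton_subset_iff.2 hiS) hj_mem

lemma IsCubeEmb.goodSeq_charVec {f : Finset (Fin n) → Finset (Fin N)} (hf : IsCubeEmb f) :
    GoodSeq (charVec f) :=
  ⟨upperClosed_charVec_of_monotone hf.monotone, hf.exists_charVec_eq_upset⟩

lemma isCubeEmb_ofCharVec {U : Fin N → Set (Finset (Fin n))} (hU : GoodSeq U) :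
    IsCubeEmb (ofCharVec U) := by
  obtain ⟨hup, hgood⟩ := hU
  refine fun A B => ⟨fun hAB j hj => ?_, fun h i hiA => ?_⟩
  · exact mem_ofCharVec.2 (hup j (mem_ofCharVec.1 hj) hAB)
  · obtain ⟨j, hj⟩ := hgood i
    have hjA : j ∈ ofCharVec U A := by simp [hj, hiA]
    simpa [hj] using h hjA

/-- The map assigning to an embedding `f` of `2^[n]` into `2^[N]` its
characteristic vector `(U₁(f), …, U_N(f))`, `U_j(f) = {S ⊆ [n] : j ∈ f S}`,
is a bijection between the embeddings of `2^[n]` into `2^[N]` and the good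
sequences of `N` upper-closed subsets of `2^[n]`. -/
theorem characteristic_vector_bijection (n N : ℕ) :
    Set.BijOn
      (fun (f : Finset (Fin n) → Finset (Fin N)) (j : Fin N) =>
        {S : Finset (Fin n) | j ∈ f S})
      {f | IsCubeEmb f} {U | GoodSeq U} :=
  ⟨fun _ hf => IsCubeEmb.goodSeq_charVec hf, charVec_injective.injOn,
    fun U hU => ⟨ofCharVec U, isCubeEmb_ofCharVec hU, charVec_ofCharVec U⟩⟩
end

section
/- A family 𝒮 ⊆ 2^{[N]} forms a copy of the Boolean lattice 2^{[n]} if and only if there exist a set I ⊆ [N] with |I| = n and an inclusion preserving map φ from subsets of I to subsets of [N] ∖ I such that 𝒮 = {Y ∪ φ(Y) : Y ⊆ I}. -/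
/-!
An embedding `f` of `2^[n]` has, for each coordinate `i`, a marker
`x i ∈ f {i} \ f ([n] \ {i})`; then `x i ∈ f A ↔ i ∈ A` for every `A`, so the markers form an
`n`-set `I` with `f A ∩ I = x(A)`, and `φ Y := f (x⁻¹ Y) \ I` gives `f A = x(A) ∪ φ (x(A))`.
Conversely, `Y ↦ Y ∪ φ Y` reflects inclusion on subsets of `I` because `φ` avoids `I`.
-/

open Finset

variable {α β : Type*} [DecidableEq β]

theorem Finset.exists_embedding_mem_iff_of_subset_iff [Fintype α] [DecidableEq α]
    {f : Finset α → Finset β} (hf : ∀ A B, A ⊆ B ↔ f A ⊆ f B) :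
    ∃ x : α ↪ β, ∀ A i, x i ∈ f A ↔ i ∈ A := by
  have h_marker : ∀ i, ∃ t ∈ f {i}, t ∉ f {i}ᶜ := by
    intro i
    by_contra! h
    simpa using (hf _ _).2 h (mem_singleton_self i)
  choose x hx_mem hx_not_mem using h_marker
  have hx : ∀ A i, x i ∈ f A ↔ i ∈ A := fun A i =>
    ⟨fun h => by_contra fun hi => hx_not_mem i ((hf _ _).1 (subset_compl_singleton.2 hi) h),
      fun hi => (hf _ _).1 (singleton_subset_iff.2 hi) (hx_mem i)⟩
  have hx_inj : Function.Injective x := fun i j hij =>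
    (mem_singleton.1 ((hx {i} j).1 (hij ▸ hx_mem i))).symm
  exact ⟨⟨x, hx_inj⟩, hx⟩

section OffMarkerPart

variable [Fintype α] (f : Finset α → Finset β) (x : α ↪ β)

def offMarkerPart (Y : Finset β) : Finset β :=
  f {i | x i ∈ Y} \ univ.map x

theorem disjoint_offMarkerPart (Y : Finset β) : Disjoint (offMarkerPart f x Y) (univ.map x) :=
  sdiff_disjoint

variable {f}

theorem offMarkerPart_mono (hf : Monotone f) {Y Y' : Finset β} (h : Y ⊆ Y') :
    offMarkerPart f x Y ⊆ offMarkerPart f x Y' :=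
  sdiff_subset_sdiff (hf fun _ hi => by simpa using h (by simpa using hi)) subset_rfl

theorem map_union_offMarkerPart (hx : ∀ A i, x i ∈ f A ↔ i ∈ A) (A : Finset α) :
    A.map x ∪ offMarkerPart f x (A.map x) = f A := by
  have h_filter : ({i | x i ∈ A.map x} : Finset α) = A := by ext; simp
  have h_inter : f A ∩ univ.map x = A.map x := by
    ext t
    simp only [mem_inter, mem_map, mem_univ, true_and]
    constructor
    · rintro ⟨ht, i, rfl⟩
      exact ⟨i, (hx A i).1 ht, rfl⟩
    · rintro ⟨i, hi, rfl⟩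
      exact ⟨(hx A i).2 hi, i, rfl⟩
  rw [offMarkerPart, h_filter, ← h_inter, union_comm, sdiff_union_inter]

end OffMarkerPart

theorem Finset.range_map_union_eq [Fintype α] (x : α ↪ β) (φ : Finset β → Finset β) :
    Set.range (fun A : Finset α => A.map x ∪ φ (A.map x)) =
      {Z | ∃ Y ⊆ univ.map x, Z = Y ∪ φ Y} := by
  ext Z
  simp only [Set.mem_range, Set.mem_ofPred_eq, subset_map_iff]
  constructor
  · rintro ⟨A, rfl⟩
    exact ⟨_, ⟨A, subset_univ A, rfl⟩, rfl⟩
  · rintro ⟨_, ⟨A, -, rfl⟩, rfl⟩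
    exact ⟨A, rfl⟩

theorem Finset.union_subset_union_iff_of_disjoint {I Y Y' P P' : Finset β} (hY : Y ⊆ I)
    (hP' : Disjoint P' I) (hP : Y ⊆ Y' → P ⊆ P') : Y ∪ P ⊆ Y' ∪ P' ↔ Y ⊆ Y' :=
  ⟨fun h _ ht => (mem_union.1 (h (mem_union_left _ ht))).resolve_right
      fun ht' => disjoint_left.1 hP' ht' (hY ht),
    fun h => union_subset_union h (hP h)⟩

/-- A family `𝒮 ⊆ 2^[N]` is a copy of `2^[n]` (the image of an embedding of
`Q_n` into `Q_N`) iff there are an `n`-element set `I ⊆ [N]` and a map `φ`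
from subsets of `I` to subsets of `[N] \ I` preserving inclusion such that
`𝒮 = {Y ∪ φ(Y) : Y ⊆ I}`. -/
theorem copy_iff_inclusion_preserving_map (n N : ℕ) (S : Set (Finset (Fin N))) :
    (∃ f : Finset (Fin n) → Finset (Fin N), IsCubeEmb f ∧ Set.range f = S) ↔
    (∃ (I : Finset (Fin N)) (φ : Finset (Fin N) → Finset (Fin N)),
      I.card = n ∧
      (∀ Y : Finset (Fin N), Y ⊆ I → Disjoint (φ Y) I) ∧
      (∀ Y Y' : Finset (Fin N), Y ⊆ I → Y' ⊆ I → Y ⊆ Y' → φ Y ⊆ φ Y') ∧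
      S = {Z : Finset (Fin N) | ∃ Y : Finset (Fin N), Y ⊆ I ∧ Z = Y ∪ φ Y}) := by
  constructor
  · rintro ⟨f, hf, rfl⟩
    obtain ⟨x, hx⟩ := exists_embedding_mem_iff_of_subset_iff hf
    refine ⟨univ.map x, offMarkerPart f x, by simp, fun Y _ => disjoint_offMarkerPart f x Y,
      fun _ _ _ _ => offMarkerPart_mono x fun A B => (hf A B).1, ?_⟩
    rw [← range_map_union_eq]
    exact congrArg Set.range (funext (map_union_offMarkerPart x hx)).symm
  · rintro ⟨I, φ, hcard, hdisj, hmono, rfl⟩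
    obtain ⟨x, rfl⟩ : ∃ x : Fin n ↪ Fin N, univ.map x = I :=
      ⟨_, map_orderEmbOfFin_univ I hcard⟩
    refine ⟨fun A => A.map x ∪ φ (A.map x), fun A B => ?_, range_map_union_eq x φ⟩
    have hmap : ∀ C : Finset (Fin n), C.map x ⊆ univ.map x := fun C =>
      map_subset_map.2 (subset_univ C)
    rw [union_subset_union_iff_of_disjoint (hmap A) (hdisj _ (hmap B))
      (hmono _ _ (hmap A) (hmap B)), map_subset_map]
end

section
/- Let P be a finite poset and let λ be a real number such that for every N, every family ℱ ⊆ 2^{[N]} containing no copy of P has Lubell mass ℓ(ℱ) ≤ λ. Then for all positive integers k and N with N + 1 > k·λ, every coloring of 2^{[N]} with k colors contains a monochromatic copy of P. In particular, R_k(P) ≤ k·λ, so R_k(P) = O(k). -/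
/-! Every `k`-colouring of `2^[N]` splits it into `k` colour classes. Were none of them to
contain a copy of `P`, each would have Lubell mass at most `λ`, so the whole cube would have
mass at most `k·λ`; but each of the `N + 1` levels of the cube has Lubell mass exactly `1`. -/

/-- Multicolor poset Ramsey number `R_k(P)`: the smallest `N` such that every
`k`-coloring of the Boolean lattice `Q_N` contains a monochromatic copy of `P`. -/
noncomputable def multicolorPosetRamsey (P : Type*) [PartialOrder P] (k : ℕ) : ℕ :=
  sInf {N | ∀ c : Finset (Fin N) → Fin k,
    ∃ (col : Fin k) (f : P → Finset (Fin N)),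
      (∀ x y : P, x ≤ y ↔ f x ⊆ f y) ∧ ∀ x, c (f x) = col}

open Finset

theorem sum_one_div_choose_card_univ (α : Type*) [Fintype α] :
    ∑ S : Finset α, (1 : ℝ) / (Fintype.card α).choose #S = Fintype.card α + 1 := by
  rw [← powerset_univ, sum_powerset_apply_card (fun m => (1 : ℝ) / (Fintype.card α).choose m),
    card_univ]
  have level_mass : ∀ m ∈ range (Fintype.card α + 1),
      (Fintype.card α).choose m • ((1 : ℝ) / (Fintype.card α).choose m) = 1 := by
    intro m hm
    have : (0 : ℝ) < (Fintype.card α).choose m :=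
      mod_cast Nat.choose_pos (Nat.lt_succ_iff.mp (mem_range.mp hm))
    rw [nsmul_eq_mul, mul_one_div_cancel this.ne']
  rw [sum_congr rfl level_mass, sum_const, card_range, nsmul_eq_mul, mul_one, Nat.cast_succ]

theorem exists_monochromatic_copy_of_lubell_mass_le {P ι : Type*} [PartialOrder P]
    [Fintype ι] [DecidableEq ι] (lam : ℝ) {N : ℕ}
    (hlam : ∀ F : Finset (Finset (Fin N)),
      (¬ ∃ f : P → Finset (Fin N),
          (∀ x y : P, x ≤ y ↔ f x ⊆ f y) ∧ ∀ x, f x ∈ F) →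
      ∑ S ∈ F, (1 : ℝ) / (N.choose S.card) ≤ lam)
    (hN : Fintype.card ι * lam < N + 1) (c : Finset (Fin N) → ι) :
    ∃ (col : ι) (f : P → Finset (Fin N)),
      (∀ x y : P, x ≤ y ↔ f x ⊆ f y) ∧ ∀ x, c (f x) = col := by
  by_contra! h
  have class_free : ∀ j : ι, ¬ ∃ f : P → Finset (Fin N),
      (∀ x y : P, x ≤ y ↔ f x ⊆ f y) ∧ ∀ x, f x ∈ ({S | c S = j} : Finset _) := by
    rintro j ⟨f, hf, hmem⟩
    obtain ⟨x, hx⟩ := h j f hf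
    exact hx (mem_filter.mp (hmem x)).2
  have := sum_one_div_choose_card_univ (Fin N)
  rw [Fintype.card_fin] at this
  have : (N : ℝ) + 1 ≤ Fintype.card ι * lam :=
    calc (N : ℝ) + 1
        = ∑ j : ι, ∑ S ∈ ({S | c S = j} : Finset _), (1 : ℝ) / N.choose #S := by
          rw [sum_fiberwise, this]
      _ ≤ ∑ _j : ι, lam := sum_le_sum fun j _ => hlam _ (class_free j)
      _ = Fintype.card ι * lam := by rw [sum_const, card_univ, nsmul_eq_mul]
  linarith

theorem multicolor_ramsey_upper_general {P : Type*} [PartialOrder P] [Nonempty P]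
    (lam : ℝ)
    (hlam : ∀ (N : ℕ) (F : Finset (Finset (Fin N))),
      (¬ ∃ f : P → Finset (Fin N),
          (∀ x y : P, x ≤ y ↔ f x ⊆ f y) ∧ ∀ x, f x ∈ F) →
      ∑ S ∈ F, (1 : ℝ) / (N.choose S.card) ≤ lam) :
    (∀ k N : ℕ, 0 < k → (k : ℝ) * lam < N + 1 →
      ∀ c : Finset (Fin N) → Fin k,
        ∃ (col : Fin k) (f : P → Finset (Fin N)),
          (∀ x y : P, x ≤ y ↔ f x ⊆ f y) ∧ ∀ x, c (f x) = col) ∧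
    ∀ k : ℕ, 0 < k → (multicolorPosetRamsey P k : ℝ) ≤ k * lam := by
  have monochromatic : ∀ k N : ℕ, (k : ℝ) * lam < N + 1 →
      ∀ c : Finset (Fin N) → Fin k,
        ∃ (col : Fin k) (f : P → Finset (Fin N)),
          (∀ x y : P, x ≤ y ↔ f x ⊆ f y) ∧ ∀ x, c (f x) = col := fun k N hN =>
    exists_monochromatic_copy_of_lubell_mass_le lam (hlam N) (by rwa [Fintype.card_fin])
  have lam_nonneg : 0 ≤ lam := by
    simpa using hlam 0 ∅ fun ⟨f, _, hmem⟩ => notMem_empty _ (hmem (Classical.arbitrary P))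
  refine ⟨fun k N _ => monochromatic k N, fun k _ => ?_⟩
  have : multicolorPosetRamsey P k ≤ ⌊(k : ℝ) * lam⌋₊ :=
    Nat.sInf_le fun c => monochromatic k _ (Nat.lt_floor_add_one _) c
  calc (multicolorPosetRamsey P k : ℝ) ≤ ⌊(k : ℝ) * lam⌋₊ := mod_cast this
    _ ≤ k * lam := Nat.floor_le (by positivity)

/-- If every `P`-free family `ℱ ⊆ 2^[N]` has Lubell mass
`ℓ(ℱ) = Σ_{S ∈ ℱ} 1/binom(N,|S|)` at most `λ`, then whenever `N + 1 > k·λ`,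
every `k`-coloring of `2^[N]` has a monochromatic copy of `P`; in particular
`R_k(P) ≤ k·λ`, so `R_k(P) = O(k)`. -/
theorem multicolor_ramsey_upper {P : Type*} [PartialOrder P] [Fintype P] [Nonempty P]
    (lam : ℝ)
    (hlam : ∀ (N : ℕ) (F : Finset (Finset (Fin N))),
      (¬ ∃ f : P → Finset (Fin N),
          (∀ x y : P, x ≤ y ↔ f x ⊆ f y) ∧ ∀ x, f x ∈ F) →
      ∑ S ∈ F, (1 : ℝ) / (N.choose S.card) ≤ lam) :
    (∀ k N : ℕ, 0 < k → (k : ℝ) * lam < N + 1 →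
      ∀ c : Finset (Fin N) → Fin k,
        ∃ (col : Fin k) (f : P → Finset (Fin N)),
          (∀ x y : P, x ≤ y ↔ f x ⊆ f y) ∧ ∀ x, c (f x) = col) ∧
    ∀ k : ℕ, 0 < k → (multicolorPosetRamsey P k : ℝ) ≤ k * lam :=
  multicolor_ramsey_upper_general lam hlam
end

section
/- For every integer n ≥ 1: (a) if 2n − 1 ≤ binom(N, ⌊N/2⌋), then every red/blue coloring of 2^{[N]} contains n pairwise incomparable subsets of [N] all of the same color (a monochromatic copy of the antichain A_n); (b) if binom(N, ⌊N/2⌋) ≤ 2n − 2, then there exists a red/blue coloring of 2^{[N]} with no monochromatic antichain of n subsets. Hence R(A_n, A_n) = min{N : 2n − 1 ≤ binom(N, ⌊N/2⌋)}. -/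
/-!
Every antichain of `2^[N]` meets each chain at most once, and `2^[N]` is the union of
`binom(N, ⌊N/2⌋)` chains, each through one set of the middle layer: by local LYM and Hall's
theorem every layer below the middle injects into the next one along `⊆`, every layer above it
into the previous one, and following these injections sends each set to a middle set whose
fiber is a chain. So a colouring that splits the middle layer into two halves of size at most
`n - 1`, and colours every chain like its middle set, has no monochromatic `A_n`. Conversely the
middle layer is an antichain, so if it has `2n - 1` sets, `n` of them share a colour.
-/

/-- Every red/blue coloring of `2^[N]` contains `n` same-colored pairwise
incomparable subsets of `[N]` (a monochromatic copy of the antichain `A_n`). -/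
def AntichainRamseyProp (n N : ℕ) : Prop :=
  ∀ c : Finset (Fin N) → Bool,
    ∃ (col : Bool) (f : Fin n → Finset (Fin N)),
      (∀ i j : Fin n, i ≠ j → ¬ f i ⊆ f j) ∧ ∀ i, c (f i) = col

open Finset
open scoped FinsetFamily

theorem IsAntichain.exists_fin_of_le_card {β : Type*} {r : β → β → Prop} {𝒜 : Finset β}
    (h𝒜 : IsAntichain r (𝒜 : Set β)) {n : ℕ} (hn : n ≤ #𝒜) :
    ∃ f : Fin n → β, (∀ i j, i ≠ j → ¬ r (f i) (f j)) ∧ ∀ i, f i ∈ 𝒜 := by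
  let f : Fin n → 𝒜 := fun i => 𝒜.equivFin.symm (Fin.castLE hn i)
  refine ⟨fun i => f i, fun i j hij => h𝒜 (f i).2 (f j).2 fun heq => hij ?_, fun i => (f i).2⟩
  exact Fin.castLE_injective hn (𝒜.equivFin.symm.injective (Subtype.ext heq))

namespace Finset

theorem card_le_of_antichain_of_chain_fibers {α β : Type*} {φ : Finset α → β}
    (hφ : ∀ s t, φ s = φ t → s ⊆ t ∨ t ⊆ s) {n : ℕ} {f : Fin n → Finset α}
    (hf : ∀ i j, i ≠ j → ¬ f i ⊆ f j) {T : Finset β} (hT : ∀ i, φ (f i) ∈ T) : n ≤ #T := by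
  simpa using card_le_card_of_injOn (φ ∘ f) (s := univ) (fun i _ => hT i)
    fun i _ j _ hij => by_contra fun hne => (hφ _ _ hij).elim (hf i j hne) (hf j i (Ne.symm hne))

section Matching

variable {α : Type*} [Fintype α] [DecidableEq α]

theorem exists_shadow_matching {r : ℕ} (hr : Fintype.card α < 2 * r) :
    ∃ f : Finset α → Finset α, ∀ s, #s = r →
      f s ⊆ s ∧ #(f s) + 1 = r ∧ ∀ t, #t = r → f s = f t → s = t := by
  let ι := {s : Finset α // #s = r}
  have hall : ∀ 𝒮 : Finset ι, #𝒮 ≤ #(𝒮.biUnion fun s => ∂ {s.1}) := by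
    intro 𝒮
    set 𝒜 := 𝒮.map (Function.Embedding.subtype _)
    have hsized : (𝒜 : Set (Finset α)).Sized r := by
      rintro _ hs
      obtain ⟨s, -, rfl⟩ := mem_map.1 hs
      exact s.2
    have hshadow : 𝒮.biUnion (fun s => ∂ {s.1}) = ∂ 𝒜 := by
      ext t
      simp only [mem_biUnion, mem_shadow_iff, mem_singleton, exists_eq_left, 𝒜, mem_map,
        Function.Embedding.coe_subtype, Subtype.exists, exists_and_right, exists_eq_right]
      exact ⟨fun ⟨⟨s, hs⟩, h𝒮, h⟩ => ⟨s, ⟨hs, h𝒮⟩, h⟩, fun ⟨s, ⟨hs, h𝒮⟩, h⟩ => ⟨⟨s, hs⟩, h𝒮, h⟩⟩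
    -- local LYM: `#𝒜 * r ≤ #∂𝒜 * (N - r + 1)`, and `N - r + 1 ≤ r`
    have hlym : #𝒜 * r ≤ #(∂ 𝒜) * r :=
      (local_lubell_yamamoto_meshalkin_inequality_mul hsized).trans
        (Nat.mul_le_mul_left _ (by omega))
    rw [hshadow, ← card_map (Function.Embedding.subtype _)]
    exact Nat.le_of_mul_le_mul_right hlym (by omega)
  obtain ⟨f, hf, hmem⟩ := (all_card_le_biUnion_card_iff_exists_injective _).1 hall
  refine ⟨fun s => if h : #s = r then f ⟨s, h⟩ else s, fun s hs => ?_⟩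
  obtain ⟨u, hu, hsub, hcard⟩ := mem_shadow_iff_exists_mem_card_add_one.1 (hmem ⟨s, hs⟩)
  rw [mem_singleton.1 hu] at hsub hcard
  refine ⟨by simpa [hs] using hsub, by simpa [hs] using hcard.symm, fun t ht hst => ?_⟩
  exact congrArg Subtype.val (@hf ⟨s, hs⟩ ⟨t, ht⟩ (by simpa [hs, ht] using hst))

theorem exists_upShadow_matching {k : ℕ} (hk : 2 * k < Fintype.card α) :
    ∃ f : Finset α → Finset α, ∀ s, #s = k →
      s ⊆ f s ∧ #(f s) = k + 1 ∧ ∀ t, #t = k → f s = f t → s = t := by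
  obtain ⟨f, hf⟩ := exists_shadow_matching (α := α) (r := Fintype.card α - k) (by omega)
  have hcompl : ∀ t : Finset α, #t = k → #tᶜ = Fintype.card α - k := fun t ht => by
    rw [card_compl, ht]
  refine ⟨fun s => (f sᶜ)ᶜ, fun s hs => ?_⟩
  obtain ⟨hsub, hcard, hinj⟩ := hf sᶜ (hcompl s hs)
  have hle : #(f sᶜ) ≤ Fintype.card α := card_le_univ _
  refine ⟨subset_compl_comm.1 hsub, by rw [card_compl]; omega, fun t ht hst => ?_⟩
  exact compl_injective (hinj tᶜ (hcompl t ht) (compl_injective hst))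

end Matching

structure IsStepTowardLayer {α : Type*} (m : ℕ) (g : Finset α → Finset α) : Prop where
  subset_of_card_lt : ∀ s, #s < m → s ⊆ g s ∧ #(g s) = #s + 1
  subset_of_lt_card : ∀ s, m < #s → g s ⊆ s ∧ #(g s) + 1 = #s
  eq_of_card_eq : ∀ s, #s = m → g s = s
  injOn_layer : ∀ s t, #s = #t → g s = g t → s = t

namespace IsStepTowardLayer

variable {α : Type*} {m : ℕ} {g : Finset α → Finset α}

theorem card_eq_card (hg : IsStepTowardLayer m g) {s t : Finset α} (h : #s = #t) :
    #(g s) = #(g t) := by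
  rcases lt_trichotomy #s m with hs | hs | hs
  · rw [(hg.subset_of_card_lt s hs).2, (hg.subset_of_card_lt t (h ▸ hs)).2, h]
  · rw [hg.eq_of_card_eq s hs, hg.eq_of_card_eq t (h ▸ hs), h]
  · have := (hg.subset_of_lt_card s hs).2
    have := (hg.subset_of_lt_card t (h ▸ hs)).2
    omega

theorem iterate_of_card_le (hg : IsStepTowardLayer m g) {s : Finset α} (hs : #s ≤ m) :
    ∀ j, s ⊆ g^[j] s ∧ #(g^[j] s) = min (#s + j) m
  | 0 => by simpa using hs
  | j + 1 => by
    obtain ⟨hsub, hcard⟩ := hg.iterate_of_card_le hs j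
    rw [Function.iterate_succ_apply']
    rcases (min_le_right _ _ |>.trans_eq' hcard.symm).lt_or_eq with hlt | heq
    · obtain ⟨hsub', hcard'⟩ := hg.subset_of_card_lt _ hlt
      exact ⟨hsub.trans hsub', by omega⟩
    · rw [hg.eq_of_card_eq _ heq]
      exact ⟨hsub, by omega⟩

theorem iterate_of_le_card (hg : IsStepTowardLayer m g) {s : Finset α} (hs : m ≤ #s) :
    ∀ j, g^[j] s ⊆ s ∧ #(g^[j] s) = max (#s - j) m
  | 0 => by simpa using hs
  | j + 1 => by
    obtain ⟨hsub, hcard⟩ := hg.iterate_of_le_card hs j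
    rw [Function.iterate_succ_apply']
    rcases (le_max_right _ _ |>.trans_eq hcard.symm).lt_or_eq with hlt | heq
    · obtain ⟨hsub', hcard'⟩ := hg.subset_of_lt_card _ hlt
      exact ⟨hsub'.trans hsub, by omega⟩
    · rw [hg.eq_of_card_eq _ heq.symm]
      exact ⟨hsub, by omega⟩

theorem iterate_injOn_layer (hg : IsStepTowardLayer m g) :
    ∀ j (s t : Finset α), #s = #t → g^[j] s = g^[j] t → s = t
  | 0, _, _, _, h => h
  | j + 1, s, t, hst, h =>
    hg.injOn_layer s t hst (hg.iterate_injOn_layer j _ _ (hg.card_eq_card hst) h)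

variable [Fintype α]

theorem card_iterate_card (hg : IsStepTowardLayer m g) (hm : m ≤ Fintype.card α)
    (s : Finset α) : #(g^[Fintype.card α] s) = m := by
  rcases le_total #s m with hs | hs
  · rw [(hg.iterate_of_card_le hs _).2]
    omega
  · rw [(hg.iterate_of_le_card hs _).2]
    have := card_le_univ s
    omega

theorem subset_or_subset_of_iterate_eq (hg : IsStepTowardLayer m g)
    (hm : m ≤ Fintype.card α) {s t : Finset α}
    (h : g^[Fintype.card α] s = g^[Fintype.card α] t) : s ⊆ t ∨ t ⊆ s := by
  set N := Fintype.card α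
  have hstable : ∀ u j, g^[N] (g^[j] u) = g^[N] u := fun u j => by
    rw [← Function.iterate_add_apply, add_comm, Function.iterate_add_apply,
      Function.iterate_fixed (hg.eq_of_card_eq _ (hg.card_iterate_card hm u))]
  wlog hst : #s ≤ #t generalizing s t
  · exact (this h.symm (by omega)).symm
  rcases le_or_gt #t m with htm | hmt
  · obtain ⟨hsub, hcard⟩ := hg.iterate_of_card_le (hst.trans htm) (#t - #s)
    have : g^[#t - #s] s = t := hg.iterate_injOn_layer N _ _ (by omega) (by rw [hstable, h])
    exact Or.inl (this ▸ hsub)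
  rcases le_or_gt m #s with hms | hsm
  · obtain ⟨hsub, hcard⟩ := hg.iterate_of_le_card (hms.trans hst) (#t - #s)
    have : g^[#t - #s] t = s := hg.iterate_injOn_layer N _ _ (by omega) (by rw [hstable, h])
    exact Or.inl (this ▸ hsub)
  · exact Or.inl ((hg.iterate_of_card_le hsm.le N).1.trans
      (h ▸ (hg.iterate_of_le_card hmt.le N).1))

end IsStepTowardLayer

theorem exists_monochromatic_antichain {α : Type*} [Fintype α] {n : ℕ}
    (h : 2 * n - 1 ≤ (Fintype.card α).choose (Fintype.card α / 2)) (c : Finset α → Bool) :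
    ∃ (col : Bool) (f : Fin n → Finset α),
      (∀ i j, i ≠ j → ¬ f i ⊆ f j) ∧ ∀ i, c (f i) = col := by
  set ℳ := powersetCard (Fintype.card α / 2) (univ : Finset α)
  have hℳ : #ℳ = (Fintype.card α).choose (Fintype.card α / 2) := by simp [ℳ]
  have hpos := (Fintype.card α).choose_pos (Nat.div_le_self (Fintype.card α) 2)
  obtain ⟨col, -, hcol⟩ := exists_lt_card_fiber_of_mul_lt_card_of_maps_to (s := ℳ) (n := n - 1)
    (fun s _ => mem_univ (c s)) (by rw [card_univ, Fintype.card_bool]; omega)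
  have hsized : ((ℳ.filter (c · = col) : Finset (Finset α)) : Set (Finset α)).Sized
      (Fintype.card α / 2) := fun s hs => (mem_powersetCard_univ.1 (mem_filter.1 hs).1)
  obtain ⟨f, hf, hfmem⟩ := hsized.isAntichain.exists_fin_of_le_card (n := n) (by omega)
  exact ⟨col, f, hf, fun i => (mem_filter.1 (hfmem i)).2⟩

section ChainCover

variable {α : Type*} [Fintype α] [DecidableEq α]

theorem exists_isStepTowardLayer_half :
    ∃ g : Finset α → Finset α, IsStepTowardLayer (Fintype.card α / 2) g := by
  set N := Fintype.card α
  choose! up hup using fun k (hk : 2 * k < N) => exists_upShadow_matching (α := α) hk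
  choose! down hdown using fun r (hr : N < 2 * r) => exists_shadow_matching (α := α) hr
  refine ⟨fun s => if #s < N / 2 then up #s s else if N / 2 < #s then down #s s else s,
    ⟨fun s hs => ?_, fun s hs => ?_, fun s hs => ?_, fun s t hst h => ?_⟩⟩
  · simp only [if_pos hs]
    exact ⟨(hup _ (by omega) s rfl).1, (hup _ (by omega) s rfl).2.1⟩
  · simp only [if_neg hs.not_gt, if_pos hs]
    exact ⟨(hdown _ (by omega) s rfl).1, (hdown _ (by omega) s rfl).2.1⟩
  · simp [hs]
  · simp only [← hst] at h
    rcases lt_trichotomy #s (N / 2) with hs | hs | hs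
    · simp only [if_pos hs] at h
      exact (hup _ (by omega) s rfl).2.2 t hst.symm h
    · simpa [hs] using h
    · simp only [if_neg hs.not_gt, if_pos hs] at h
      exact (hdown _ (by omega) s rfl).2.2 t hst.symm h

theorem exists_chain_fibers_map_middle_layer :
    ∃ φ : Finset α → Finset α, (∀ s, #(φ s) = Fintype.card α / 2) ∧
      ∀ s t, φ s = φ t → s ⊆ t ∨ t ⊆ s := by
  obtain ⟨g, hg⟩ := exists_isStepTowardLayer_half (α := α)
  have hm : Fintype.card α / 2 ≤ Fintype.card α := Nat.div_le_self _ 2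
  exact ⟨g^[Fintype.card α], hg.card_iterate_card hm,
    fun _ _ => hg.subset_or_subset_of_iterate_eq hm⟩

theorem exists_coloring_forall_not_monochromatic_antichain {n : ℕ}
    (h : (Fintype.card α).choose (Fintype.card α / 2) ≤ 2 * n - 2) :
    ∃ c : Finset α → Bool, ¬ ∃ (col : Bool) (f : Fin n → Finset α),
      (∀ i j, i ≠ j → ¬ f i ⊆ f j) ∧ ∀ i, c (f i) = col := by
  obtain ⟨φ, hφmid, hφ⟩ := exists_chain_fibers_map_middle_layer (α := α)
  set ℳ := powersetCard (Fintype.card α / 2) (univ : Finset α)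
  have hℳ : #ℳ = (Fintype.card α).choose (Fintype.card α / 2) := by simp [ℳ]
  have hpos := (Fintype.card α).choose_pos (Nat.div_le_self (Fintype.card α) 2)
  obtain ⟨R, hRℳ, hR⟩ := exists_subset_card_eq (min_le_right (n - 1) #ℳ)
  refine ⟨fun s => decide (φ s ∈ R), ?_⟩
  rintro ⟨col, f, hf, hcol⟩
  cases col
  · have hle := card_le_of_antichain_of_chain_fibers hφ hf (T := ℳ \ R) fun i =>
      mem_sdiff.2 ⟨mem_powersetCard_univ.2 (hφmid _), by simpa using hcol i⟩
    rw [card_sdiff_of_subset hRℳ] at hle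
    omega
  · have hle := card_le_of_antichain_of_chain_fibers hφ hf (T := R) fun i => by
      simpa using hcol i
    omega

end ChainCover

end Finset

theorem antichain_ramsey_general (n : ℕ) :
    (∀ N : ℕ, 2 * n - 1 ≤ N.choose (N / 2) → AntichainRamseyProp n N) ∧
    (∀ N : ℕ, N.choose (N / 2) ≤ 2 * n - 2 →
      ∃ c : Finset (Fin N) → Bool,
        ¬ ∃ (col : Bool) (f : Fin n → Finset (Fin N)),
            (∀ i j : Fin n, i ≠ j → ¬ f i ⊆ f j) ∧ ∀ i, c (f i) = col) ∧
    sInf {N | AntichainRamseyProp n N} = sInf {N | 2 * n - 1 ≤ N.choose (N / 2)} := by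
  have hlower : ∀ N : ℕ, 2 * n - 1 ≤ N.choose (N / 2) → AntichainRamseyProp n N :=
    fun N h => exists_monochromatic_antichain (by simpa using h)
  have hupper : ∀ N : ℕ, N.choose (N / 2) ≤ 2 * n - 2 → ∃ c : Finset (Fin N) → Bool,
      ¬ ∃ (col : Bool) (f : Fin n → Finset (Fin N)),
        (∀ i j : Fin n, i ≠ j → ¬ f i ⊆ f j) ∧ ∀ i, c (f i) = col :=
    fun N h => exists_coloring_forall_not_monochromatic_antichain (by simpa using h)
  have hset : {N | AntichainRamseyProp n N} = {N | 2 * n - 1 ≤ N.choose (N / 2)} := by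
    ext N
    refine ⟨fun hN => ?_, hlower N⟩
    by_contra hlt
    obtain ⟨c, hc⟩ := hupper N (by simp only [Set.mem_ofPred_eq] at hlt; omega)
    exact hc (hN c)
  exact ⟨hlower, hupper, by rw [hset]⟩

/-- For `n ≥ 1`: (a) if `2n - 1 ≤ binom(N, ⌊N/2⌋)` then every red/blue coloring
of `2^[N]` has a monochromatic antichain of `n` subsets; (b) if
`binom(N, ⌊N/2⌋) ≤ 2n - 2` then some red/blue coloring of `2^[N]` has none.
Hence `R(A_n, A_n) = min {N : 2n - 1 ≤ binom(N, ⌊N/2⌋)}`. -/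
theorem antichain_ramsey (n : ℕ) (hn : 1 ≤ n) :
    (∀ N : ℕ, 2 * n - 1 ≤ N.choose (N / 2) → AntichainRamseyProp n N) ∧
    (∀ N : ℕ, N.choose (N / 2) ≤ 2 * n - 2 →
      ∃ c : Finset (Fin N) → Bool,
        ¬ ∃ (col : Bool) (f : Fin n → Finset (Fin N)),
            (∀ i j : Fin n, i ≠ j → ¬ f i ⊆ f j) ∧ ∀ i, c (f i) = col) ∧
    sInf {N | AntichainRamseyProp n N} = sInf {N | 2 * n - 1 ≤ N.choose (N / 2)} :=
  antichain_ramsey_general n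
end
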